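/- arXiv:0705.3188 — 7 statements merged into one kernel-verified Lean document; each statement's English description precedes it below -/
import Mathlib

section
/- If the matrix A (n×n, n≥2) with diagonal entries -a_i (a_i>0), subdiagonal entries b_i (b_i>0, entry (i+1,i)=b_i for i=1..n-1), top-right entry (1,n) equal to -b_n (b_n>0), and all other entries zero, satisfies (b_1⋯b_n)/(a_1⋯a_n) < sec(π/n)^n, then A is Hurwitz (all eigenvalues have negative real part). -/
/-!
Let `μ` be an eigenvalue with `Re μ ≥ 0` and eigenvector `v`. Row `i` of the eigenvalue equation
reads `(μ + aᵢ) vᵢ = ± b_{i-1} v_{i-1}` (cyclically, with the sign `-` only in row `0`), and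
multiplying all rows gives `∏ (μ + aᵢ) = -∏ bᵢ` (no `vᵢ` vanishes, as the `bᵢ` do not). Hence
the arguments `θᵢ = |arg (μ + aᵢ)|`, which lie in `[0, π/2]`, add up to at least `π`, while
`aᵢ ≤ Re (μ + aᵢ) = |μ + aᵢ| cos θᵢ`. By AM-GM, Jensen's inequality for `cos` on `[0, π/2]` and
monotonicity of `cos`, `∏ cos θᵢ ≤ cos (π/n)ⁿ`, so `∏ aᵢ ≤ cos (π/n)ⁿ ∏ bᵢ`, contradicting the
secant condition.
-/

open Matrix Real

/-- Hurwitz: every complex eigenvalue has strictly negative real part. -/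
def Hurwitz {n : Type*} [Fintype n] [DecidableEq n] (A : Matrix n n ℝ) : Prop :=
  ∀ μ ∈ spectrum ℂ (A.map (algebraMap ℝ ℂ)), μ.re < 0

theorem Complex.arg_prod_coe_angle {ι : Type*} {s : Finset ι} {z : ι → ℂ}
    (hz : ∀ i ∈ s, z i ≠ 0) :
    ((∏ i ∈ s, z i).arg : Real.Angle) = ∑ i ∈ s, ((z i).arg : Real.Angle) := by
  classical
  induction s using Finset.induction_on with
  | empty => simp
  | insert j s hj ih =>
    rw [Finset.prod_insert hj, Finset.sum_insert hj,
      Complex.arg_mul_coe_angle (hz j (s.mem_insert_self j))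
        (Finset.prod_ne_zero_iff.2 fun i hi => hz i (Finset.mem_insert_of_mem hi)),
      ih fun i hi => hz i (Finset.mem_insert_of_mem hi)]

theorem Complex.pi_le_sum_abs_arg_of_arg_prod_eq_pi {ι : Type*} [Fintype ι] {z : ι → ℂ}
    (harg : (∏ i, z i).arg = π) : π ≤ ∑ i, |(z i).arg| := by
  have hz : ∀ i, z i ≠ 0 := fun i hi => by
    rw [Finset.prod_eq_zero (Finset.mem_univ i) hi, Complex.arg_zero] at harg
    exact Real.pi_ne_zero harg.symm
  by_contra! hlt
  have hsum_lt : |∑ i, (z i).arg| < π := (Finset.abs_sum_le_sum_abs _ _).trans_lt hlt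
  have hcoe : ((∑ i, (z i).arg : ℝ) : Real.Angle) = π := by
    rw [← harg, Complex.arg_prod_coe_angle fun i _ => hz i, ← Real.Angle.coe_coeHom, map_sum]
  have hsum_eq := congrArg Real.Angle.toReal hcoe
  rw [Real.Angle.toReal_pi, Real.Angle.toReal_coe_eq_self_iff.2
    ⟨neg_lt_of_abs_lt hsum_lt, (lt_of_abs_lt hsum_lt).le⟩] at hsum_eq
  exact hsum_lt.ne (by rw [hsum_eq, abs_of_pos Real.pi_pos])

theorem Real.prod_le_arith_mean_pow {ι : Type*} [Fintype ι] {f : ι → ℝ} (hf : ∀ i, 0 ≤ f i) :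
    ∏ i, f i ≤ ((∑ i, f i) / Fintype.card ι) ^ Fintype.card ι := by
  set n := Fintype.card ι
  rcases Nat.eq_zero_or_pos n with hn | hn
  · simp [hn, Fintype.card_eq_zero_iff.1 hn]
  have hn' : (n : ℝ) ≠ 0 := by positivity
  have hprod : 0 ≤ ∏ i, f i := Finset.prod_nonneg fun i _ => hf i
  have hamgm := Real.geom_mean_le_arith_mean_weighted Finset.univ (fun _ => 1 / (n : ℝ)) f
    (fun _ _ => by positivity) (by simp [n, hn']) fun i _ => hf i
  rw [Real.finsetProd_rpow _ _ fun i _ => hf i, ← Finset.mul_sum, one_div_mul_eq_div] at hamgm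
  calc ∏ i, f i = ((∏ i, f i) ^ (1 / (n : ℝ))) ^ n := by
        rw [← Real.rpow_natCast, ← Real.rpow_mul hprod, one_div_mul_cancel hn', Real.rpow_one]
    _ ≤ ((∑ i, f i) / n) ^ n := by gcongr

theorem Real.prod_cos_le_cos_pi_div_card_pow {ι : Type*} [Fintype ι] {θ : ι → ℝ}
    (hθ : ∀ i, θ i ∈ Set.Icc 0 (π / 2)) (hsum : π ≤ ∑ i, θ i) :
    ∏ i, cos (θ i) ≤ cos (π / Fintype.card ι) ^ Fintype.card ι := by
  set n := Fintype.card ι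
  have hn : (0 : ℝ) < n := by
    rcases Nat.eq_zero_or_pos n with hn | hn
    · rw [Finset.univ_eq_empty_iff.2 (Fintype.card_eq_zero_iff.1 hn), Finset.sum_empty] at hsum
      linarith [Real.pi_pos]
    · exact_mod_cast hn
  have hcos : ∀ i, 0 ≤ cos (θ i) := fun i =>
    cos_nonneg_of_mem_Icc ⟨by linarith [(hθ i).1, Real.pi_pos], (hθ i).2⟩
  have hmean_le : (∑ i, θ i) / n ≤ π / 2 := by
    rw [div_le_iff₀ hn]
    calc ∑ i, θ i ≤ ∑ _i : ι, π / 2 := Finset.sum_le_sum fun i _ => (hθ i).2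
      _ = π / 2 * n := by simp [n, mul_comm]
  have hmean_ge : π / n ≤ (∑ i, θ i) / n := div_le_div_of_nonneg_right hsum hn.le
  have hjensen : (∑ i, cos (θ i)) / n ≤ cos ((∑ i, θ i) / n) := by
    have := strictConcaveOn_cos_Icc.concaveOn.le_map_sum (t := Finset.univ)
      (w := fun _ => 1 / (n : ℝ)) (p := θ) (fun _ _ => by positivity) (by simp [n, hn.ne'])
      fun i _ => ⟨by linarith [(hθ i).1, Real.pi_pos], (hθ i).2⟩
    simpa only [smul_eq_mul, one_div_mul_eq_div, ← Finset.sum_div] using this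
  calc ∏ i, cos (θ i) ≤ ((∑ i, cos (θ i)) / n) ^ n := Real.prod_le_arith_mean_pow hcos
    _ ≤ cos ((∑ i, θ i) / n) ^ n := by
        gcongr
        exact div_nonneg (Finset.sum_nonneg fun i _ => hcos i) hn.le
    _ ≤ cos (π / n) ^ n := by
        gcongr ?_ ^ n
        · exact cos_nonneg_of_mem_Icc
            ⟨by linarith [div_pos Real.pi_pos hn, hmean_ge], by linarith [Real.pi_pos]⟩
        · exact Real.cos_le_cos_of_nonneg_of_le_pi (by positivity) (by linarith [Real.pi_pos])
            hmean_ge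

theorem Complex.prod_re_le_cos_pi_div_card_pow_mul_prod_norm {ι : Type*} [Fintype ι]
    {z : ι → ℂ} (hre : ∀ i, 0 ≤ (z i).re) (harg : (∏ i, z i).arg = π) :
    ∏ i, (z i).re ≤ Real.cos (π / Fintype.card ι) ^ Fintype.card ι * ∏ i, ‖z i‖ := by
  calc ∏ i, (z i).re = (∏ i, Real.cos |(z i).arg|) * ∏ i, ‖z i‖ := by
        rw [← Finset.prod_mul_distrib]
        exact Finset.prod_congr rfl fun i _ => by
          rw [Real.cos_abs, mul_comm, Complex.norm_mul_cos_arg]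
    _ ≤ Real.cos (π / Fintype.card ι) ^ Fintype.card ι * ∏ i, ‖z i‖ := by
        gcongr
        exact Real.prod_cos_le_cos_pi_div_card_pow
          (fun i => ⟨abs_nonneg _, Complex.abs_arg_le_pi_div_two_iff.2 (hre i)⟩)
          (Complex.pi_le_sum_abs_arg_of_arg_prod_eq_pi harg)

theorem Matrix.exists_mulVec_eq_smul_of_mem_spectrum {ι K : Type*} [Fintype ι] [DecidableEq ι]
    [Field K] {M : Matrix ι ι K} {μ : K} (hμ : μ ∈ spectrum K M) :
    ∃ v ≠ 0, M *ᵥ v = μ • v := by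
  rw [← Matrix.spectrum_toLin', ← Module.End.hasEigenvalue_iff_mem_spectrum] at hμ
  obtain ⟨v, hv⟩ := hμ.exists_hasEigenvector
  exact ⟨v, hv.2, hv.apply_eq_smul⟩

open scoped Fin.NatCast in
theorem Fin.prod_eq_prod_of_mul_eq_mul_sub_one {R : Type*} [CommRing R] [IsDomain R] {n : ℕ}
    [NeZero n] {z w v : Fin n → R} (hv : v ≠ 0) (hw : ∀ i, w i ≠ 0)
    (h : ∀ i, z i * v i = w i * v (i - 1)) : ∏ i, z i = ∏ i, w i := by
  have hv_ne : ∀ i, v i ≠ 0 := by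
    intro i hi
    have hpred : ∀ k : ℕ, v (i - (k : Fin n)) = 0 := by
      intro k
      induction k with
      | zero => simpa using hi
      | succ k ih =>
        have := h (i - (k : Fin n))
        rw [ih, mul_zero, zero_eq_mul] at this
        simpa [sub_sub] using this.resolve_left (hw _)
    exact hv (funext fun j => by simpa using hpred (i - j).val)
  have hprod : (∏ i, z i) * ∏ i, v i = (∏ i, w i) * ∏ i, v i := by
    rw [← Finset.prod_mul_distrib, Finset.prod_congr rfl fun i _ => h i, Finset.prod_mul_distrib,
      ← (Equiv.subRight (1 : Fin n)).prod_comp v]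
    rfl
  exact mul_right_cancel₀ (Finset.prod_ne_zero_iff.2 fun i _ => hv_ne i) hprod

def cyclicFeedbackMatrix {n : ℕ} (a b : Fin n → ℝ) : Matrix (Fin n) (Fin n) ℝ :=
  Matrix.of fun i j =>
    if i = j then -a i
    else if (i : ℕ) = (j : ℕ) + 1 then b j
    else if (i : ℕ) = 0 ∧ (j : ℕ) = n - 1 then -b j
    else 0

section CyclicFeedbackMatrix

variable {m : ℕ} {a b : Fin (m + 2) → ℝ}

theorem cyclicFeedbackMatrix_apply (i j : Fin (m + 2)) :
    cyclicFeedbackMatrix a b i j =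
      (if j = i then -a i else 0) + if j = i - 1 then (if i = 0 then -1 else 1) * b j else 0 := by
  have hpred := Fin.coe_sub_one i
  simp only [cyclicFeedbackMatrix, of_apply, Fin.ext_iff, Fin.val_zero] at hpred ⊢
  split_ifs at hpred ⊢ <;> first | (exfalso; omega) | ring

theorem cyclicFeedbackMatrix_mulVec_apply (v : Fin (m + 2) → ℂ) (i : Fin (m + 2)) :
    ((cyclicFeedbackMatrix a b).map (algebraMap ℝ ℂ) *ᵥ v) i =
      -a i * v i + (if i = 0 then -1 else 1) * b (i - 1) * v (i - 1) := by
  simp only [mulVec, dotProduct, map_apply, cyclicFeedbackMatrix_apply, map_add, add_mul,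
    Finset.sum_add_distrib, apply_ite (algebraMap ℝ ℂ), ite_mul, map_zero, zero_mul,
    Finset.sum_ite_eq', Finset.mem_univ, if_true]
  split_ifs <;> simp

theorem prod_add_eq_neg_prod_of_mem_spectrum_cyclicFeedbackMatrix (hb : ∀ i, b i ≠ 0) {μ : ℂ}
    (hμ : μ ∈ spectrum ℂ ((cyclicFeedbackMatrix a b).map (algebraMap ℝ ℂ))) :
    ∏ i, (μ + a i) = -∏ i, (b i : ℂ) := by
  obtain ⟨v, hv, hμv⟩ := exists_mulVec_eq_smul_of_mem_spectrum hμ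
  have hrow : ∀ i, (μ + a i) * v i = (if i = 0 then -1 else 1) * b (i - 1) * v (i - 1) := by
    intro i
    have := congrFun hμv i
    rw [cyclicFeedbackMatrix_mulVec_apply, Pi.smul_apply, smul_eq_mul] at this
    linear_combination -this
  have hshift : ∏ i, (b (i - 1) : ℂ) = ∏ i, (b i : ℂ) :=
    (Equiv.subRight (1 : Fin (m + 2))).prod_comp fun i => (b i : ℂ)
  rw [Fin.prod_eq_prod_of_mul_eq_mul_sub_one hv (fun i => by split_ifs <;> simp [hb]) hrow,
    Finset.prod_mul_distrib, Finset.prod_ite_eq' Finset.univ (0 : Fin (m + 2)), hshift]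
  simp

theorem prod_le_cos_pi_div_pow_mul_prod_of_mem_spectrum_cyclicFeedbackMatrix
    (ha : ∀ i, 0 ≤ a i) (hb : ∀ i, 0 < b i) {μ : ℂ}
    (hμ : μ ∈ spectrum ℂ ((cyclicFeedbackMatrix a b).map (algebraMap ℝ ℂ))) (hμre : 0 ≤ μ.re) :
    ∏ i, a i ≤ cos (π / (m + 2 : ℕ)) ^ (m + 2) * ∏ i, b i := by
  have hchar := prod_add_eq_neg_prod_of_mem_spectrum_cyclicFeedbackMatrix (fun i => (hb i).ne') hμ
  have hre : ∀ i, a i ≤ (μ + a i).re := fun i => by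
    simp only [Complex.add_re, Complex.ofReal_re]
    linarith
  have harg : (∏ i, (μ + a i)).arg = π := by
    rw [hchar, ← Complex.ofReal_prod, ← Complex.ofReal_neg]
    exact Complex.arg_ofReal_of_neg (neg_lt_zero.2 (Finset.prod_pos fun i _ => hb i))
  have hnorm : ∏ i, ‖μ + a i‖ = ∏ i, b i := by
    rw [← norm_prod, hchar, norm_neg, norm_prod]
    exact Finset.prod_congr rfl fun i _ => Complex.norm_of_nonneg (hb i).le
  calc ∏ i, a i ≤ ∏ i, (μ + a i).re := Finset.prod_le_prod (fun i _ => ha i) fun i _ => hre i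
    _ ≤ cos (π / (m + 2 : ℕ)) ^ (m + 2) * ∏ i, b i := by
        simpa only [Fintype.card_fin, hnorm] using
          Complex.prod_re_le_cos_pi_div_card_pow_mul_prod_norm (fun i => (ha i).trans (hre i)) harg

end CyclicFeedbackMatrix

theorem secant_criterion_sufficient (n : ℕ) (hn : 2 ≤ n)
    (a b : Fin n → ℝ) (ha : ∀ i, 0 < a i) (hb : ∀ i, 0 < b i)
    (A : Matrix (Fin n) (Fin n) ℝ)
    (hA : ∀ i j : Fin n, A i j =
      if i = j then -a i
      else if (i : ℕ) = (j : ℕ) + 1 then b j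
      else if (i : ℕ) = 0 ∧ (j : ℕ) = n - 1 then -b j
      else 0)
    (hsec : (∏ i, b i) / (∏ i, a i) < (1 / Real.cos (Real.pi / n)) ^ n) :
    Hurwitz A := by
  obtain ⟨m, rfl⟩ : ∃ m, n = m + 2 := ⟨n - 2, by omega⟩
  obtain rfl : A = cyclicFeedbackMatrix a b := Matrix.ext hA
  intro μ hμ
  by_contra! hμre
  have hbound := prod_le_cos_pi_div_pow_mul_prod_of_mem_spectrum_cyclicFeedbackMatrix
    (fun i => (ha i).le) hb hμ hμre
  have hpa : 0 < ∏ i, a i := Finset.prod_pos fun i _ => ha i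
  have hpb : 0 < ∏ i, b i := Finset.prod_pos fun i _ => hb i
  have hcos : 0 < cos (π / (m + 2 : ℕ)) ^ (m + 2) :=
    pos_of_mul_pos_left (hpa.trans_le hbound) hpb.le
  refine hsec.not_ge ?_
  rw [_root_.one_div_pow, div_le_div_iff₀ hcos hpa]
  linarith
end

section
/- Let γ_1,...,γ_7>0 and let E be the 7×7 matrix with diagonal entries -1/γ_l, with E_{21}=E_{32}=E_{43}=E_{51}=E_{65}=E_{76}=1, E_{14}=E_{17}=-1, and all other entries zero. Then E is diagonally stable if and only if γ_1γ_2γ_3γ_4 + γ_1γ_5γ_6γ_7 < 4. -/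
open Matrix

def NegDefQ {n : Type*} [Fintype n] (M : Matrix n n ℝ) : Prop :=
  ∀ x : n → ℝ, x ≠ 0 → x ⬝ᵥ M.mulVec x < 0

def DiagStable {n : Type*} [Fintype n] [DecidableEq n] (E : Matrix n n ℝ) : Prop :=
  ∃ d : n → ℝ, (∀ i, 0 < d i) ∧ NegDefQ (Eᵀ * diagonal d + diagonal d * E)

/-- Dissipativity matrix of the branched feedback-inhibition network
(indices 0..6 correspond to links 1..7). -/
noncomputable def branchedE (γ : Fin 7 → ℝ) : Matrix (Fin 7) (Fin 7) ℝ :=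
  !![-(γ 0)⁻¹, 0, 0, -1, 0, 0, -1;
     1, -(γ 1)⁻¹, 0, 0, 0, 0, 0;
     0, 1, -(γ 2)⁻¹, 0, 0, 0, 0;
     0, 0, 1, -(γ 3)⁻¹, 0, 0, 0;
     1, 0, 0, 0, -(γ 4)⁻¹, 0, 0;
     0, 0, 0, 0, 1, -(γ 5)⁻¹, 0;
     0, 0, 0, 0, 0, 1, -(γ 6)⁻¹]

namespace BranchedSecant

noncomputable def Fq (γ d x : Fin 7 → ℝ) : ℝ :=
  (γ 0)⁻¹ * d 0 * x 0 ^ 2 + (γ 1)⁻¹ * d 1 * x 1 ^ 2 + (γ 2)⁻¹ * d 2 * x 2 ^ 2 +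
  (γ 3)⁻¹ * d 3 * x 3 ^ 2 + (γ 4)⁻¹ * d 4 * x 4 ^ 2 + (γ 5)⁻¹ * d 5 * x 5 ^ 2 +
  (γ 6)⁻¹ * d 6 * x 6 ^ 2
  - d 1 * x 0 * x 1 - d 2 * x 1 * x 2 - d 3 * x 2 * x 3 + d 0 * x 0 * x 3
  - d 4 * x 0 * x 4 - d 5 * x 4 * x 5 - d 6 * x 5 * x 6 + d 0 * x 0 * x 6

lemma fin7_1 : (1 : Fin 7) = ((0 : Fin 6)).succ := rfl
lemma fin7_2 : (2 : Fin 7) = ((1 : Fin 6)).succ := rfl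
lemma fin7_3 : (3 : Fin 7) = ((2 : Fin 6)).succ := rfl
lemma fin7_4 : (4 : Fin 7) = ((3 : Fin 6)).succ := rfl
lemma fin7_5 : (5 : Fin 7) = ((4 : Fin 6)).succ := rfl
lemma fin7_6 : (6 : Fin 7) = ((5 : Fin 6)).succ := rfl
lemma fin6_1 : (1 : Fin 6) = ((0 : Fin 5)).succ := rfl
lemma fin6_2 : (2 : Fin 6) = ((1 : Fin 5)).succ := rfl
lemma fin6_3 : (3 : Fin 6) = ((2 : Fin 5)).succ := rfl
lemma fin6_4 : (4 : Fin 6) = ((3 : Fin 5)).succ := rfl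
lemma fin6_5 : (5 : Fin 6) = ((4 : Fin 5)).succ := rfl
lemma fin5_1 : (1 : Fin 5) = ((0 : Fin 4)).succ := rfl
lemma fin5_2 : (2 : Fin 5) = ((1 : Fin 4)).succ := rfl
lemma fin5_3 : (3 : Fin 5) = ((2 : Fin 4)).succ := rfl
lemma fin5_4 : (4 : Fin 5) = ((3 : Fin 4)).succ := rfl
lemma fin4_1 : (1 : Fin 4) = ((0 : Fin 3)).succ := rfl
lemma fin4_2 : (2 : Fin 4) = ((1 : Fin 3)).succ := rfl
lemma fin4_3 : (3 : Fin 4) = ((2 : Fin 3)).succ := rfl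
lemma fin3_1 : (1 : Fin 3) = ((0 : Fin 2)).succ := rfl
lemma fin3_2 : (2 : Fin 3) = ((1 : Fin 2)).succ := rfl
lemma fin2_1 : (1 : Fin 2) = ((0 : Fin 1)).succ := rfl

set_option maxHeartbeats 2000000 in
lemma quad_eval (γ d x : Fin 7 → ℝ) :
    x ⬝ᵥ ((branchedE γ)ᵀ * diagonal d + diagonal d * branchedE γ).mulVec x
      = -2 * Fq γ d x := by
  simp only [branchedE, Fq, Matrix.mulVec, dotProduct, Fin.sum_univ_seven,
    Matrix.add_apply, Matrix.mul_diagonal, Matrix.diagonal_mul, Matrix.transpose_apply,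
    fin7_1, fin7_2, fin7_3, fin7_4, fin7_5, fin7_6, fin6_1, fin6_2, fin6_3, fin6_4,
    fin6_5, fin5_1, fin5_2, fin5_3, fin5_4, fin4_1, fin4_2, fin4_3, fin3_1, fin3_2,
    fin2_1, Matrix.cons_val_succ, Matrix.cons_val_zero, Matrix.cons_val',
    Matrix.empty_val', Matrix.cons_val_fin_one, Matrix.of_apply]
  ring

lemma coeff_sq_zero {A s : ℝ} (hA : 0 < A) (h : A * s ^ 2 ≤ 0) : s = 0 := by
  by_contra hs
  have h1 : 0 < s ^ 2 := lt_of_le_of_ne (sq_nonneg s) (Ne.symm (pow_ne_zero 2 hs))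
  nlinarith [mul_pos hA h1]

end BranchedSecant

namespace BranchedSecant

set_option maxHeartbeats 4000000 in
lemma backward (γ : Fin 7 → ℝ) (hγ : ∀ i, 0 < γ i)
    (hG : γ 0 * γ 1 * γ 2 * γ 3 + γ 0 * γ 4 * γ 5 * γ 6 < 4) :
    DiagStable (branchedE γ) := by
  have hg0 := hγ 0; have hg1 := hγ 1; have hg2 := hγ 2; have hg3 := hγ 3
  have hg4 := hγ 4; have hg5 := hγ 5; have hg6 := hγ 6
  have hG0 : 0 < γ 0 * γ 1 * γ 2 * γ 3 + γ 0 * γ 4 * γ 5 * γ 6 := by positivity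
  obtain ⟨σ, hσ0, hσ1, h4σ⟩ :
      ∃ σ : ℝ, 0 < σ ∧ σ < 1 ∧ γ 0 * γ 1 * γ 2 * γ 3 + γ 0 * γ 4 * γ 5 * γ 6 < 4 * σ :=
    ⟨(4 + (γ 0 * γ 1 * γ 2 * γ 3 + γ 0 * γ 4 * γ 5 * γ 6)) / 8,
      by linarith, by linarith, by linarith⟩
  refine ⟨![1, γ 2 * γ 3 / 2, σ * γ 3 / γ 1, 2 * σ / (γ 1 * γ 2),
      γ 5 * γ 6 / 2, σ * γ 6 / γ 4, 2 * σ / (γ 4 * γ 5)], ?_, ?_⟩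
  · intro i
    fin_cases i
    · norm_num
    · show (0:ℝ) < γ 2 * γ 3 / 2; positivity
    · show (0:ℝ) < σ * γ 3 / γ 1; positivity
    · show (0:ℝ) < 2 * σ / (γ 1 * γ 2); positivity
    · show (0:ℝ) < γ 5 * γ 6 / 2; positivity
    · show (0:ℝ) < σ * γ 6 / γ 4; positivity
    · show (0:ℝ) < 2 * σ / (γ 4 * γ 5); positivity
  · intro x hx
    rw [quad_eval]
    have e0 : (![1, γ 2 * γ 3 / 2, σ * γ 3 / γ 1, 2 * σ / (γ 1 * γ 2),
        γ 5 * γ 6 / 2, σ * γ 6 / γ 4, 2 * σ / (γ 4 * γ 5)] : Fin 7 → ℝ) 0 = 1 := rfl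
    have e1 : (![1, γ 2 * γ 3 / 2, σ * γ 3 / γ 1, 2 * σ / (γ 1 * γ 2),
        γ 5 * γ 6 / 2, σ * γ 6 / γ 4, 2 * σ / (γ 4 * γ 5)] : Fin 7 → ℝ) 1 = γ 2 * γ 3 / 2 := rfl
    have e2 : (![1, γ 2 * γ 3 / 2, σ * γ 3 / γ 1, 2 * σ / (γ 1 * γ 2),
        γ 5 * γ 6 / 2, σ * γ 6 / γ 4, 2 * σ / (γ 4 * γ 5)] : Fin 7 → ℝ) 2 = σ * γ 3 / γ 1 := rfl
    have e3 : (![1, γ 2 * γ 3 / 2, σ * γ 3 / γ 1, 2 * σ / (γ 1 * γ 2),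
        γ 5 * γ 6 / 2, σ * γ 6 / γ 4, 2 * σ / (γ 4 * γ 5)] : Fin 7 → ℝ) 3 = 2 * σ / (γ 1 * γ 2) := rfl
    have e4 : (![1, γ 2 * γ 3 / 2, σ * γ 3 / γ 1, 2 * σ / (γ 1 * γ 2),
        γ 5 * γ 6 / 2, σ * γ 6 / γ 4, 2 * σ / (γ 4 * γ 5)] : Fin 7 → ℝ) 4 = γ 5 * γ 6 / 2 := rfl
    have e5 : (![1, γ 2 * γ 3 / 2, σ * γ 3 / γ 1, 2 * σ / (γ 1 * γ 2),
        γ 5 * γ 6 / 2, σ * γ 6 / γ 4, 2 * σ / (γ 4 * γ 5)] : Fin 7 → ℝ) 5 = σ * γ 6 / γ 4 := rfl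
    have e6 : (![1, γ 2 * γ 3 / 2, σ * γ 3 / γ 1, 2 * σ / (γ 1 * γ 2),
        γ 5 * γ 6 / 2, σ * γ 6 / γ 4, 2 * σ / (γ 4 * γ 5)] : Fin 7 → ℝ) 6 = 2 * σ / (γ 4 * γ 5) := rfl
    have key : Fq γ
        ![1, γ 2 * γ 3 / 2, σ * γ 3 / γ 1, 2 * σ / (γ 1 * γ 2),
          γ 5 * γ 6 / 2, σ * γ 6 / γ 4, 2 * σ / (γ 4 * γ 5)] x =
        2 * σ / (γ 1 * γ 2 * γ 3) *
            (x 3 + γ 1 * γ 2 * γ 3 / (4 * σ) * x 0 - γ 3 / 2 * x 2) ^ 2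
        + σ * γ 3 / (2 * γ 1 * γ 2) *
            (x 2 + γ 1 * γ 2 / (2 * σ) * x 0 - γ 2 * x 1) ^ 2
        + (1 - σ) * γ 2 * γ 3 / (2 * γ 1) * x 1 ^ 2
        + 2 * σ / (γ 4 * γ 5 * γ 6) *
            (x 6 + γ 4 * γ 5 * γ 6 / (4 * σ) * x 0 - γ 6 / 2 * x 5) ^ 2
        + σ * γ 6 / (2 * γ 4 * γ 5) *
            (x 5 + γ 4 * γ 5 / (2 * σ) * x 0 - γ 5 * x 4) ^ 2
        + (1 - σ) * γ 5 * γ 6 / (2 * γ 4) * x 4 ^ 2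
        + (4 * σ - (γ 0 * γ 1 * γ 2 * γ 3 + γ 0 * γ 4 * γ 5 * γ 6)) / (4 * σ * γ 0)
            * x 0 ^ 2 := by
      simp only [Fq, e0, e1, e2, e3, e4, e5, e6]
      field_simp
      ring
    have c4 : (0:ℝ) < 2 * σ / (γ 1 * γ 2 * γ 3) := by positivity
    have c3 : (0:ℝ) < σ * γ 3 / (2 * γ 1 * γ 2) := by positivity
    have cB1 : (0:ℝ) < (1 - σ) * γ 2 * γ 3 / (2 * γ 1) := by
      have : (0:ℝ) < 1 - σ := by linarith
      positivity
    have c7 : (0:ℝ) < 2 * σ / (γ 4 * γ 5 * γ 6) := by positivity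
    have c6 : (0:ℝ) < σ * γ 6 / (2 * γ 4 * γ 5) := by positivity
    have cB2 : (0:ℝ) < (1 - σ) * γ 5 * γ 6 / (2 * γ 4) := by
      have : (0:ℝ) < 1 - σ := by linarith
      positivity
    have cA : (0:ℝ) <
        (4 * σ - (γ 0 * γ 1 * γ 2 * γ 3 + γ 0 * γ 4 * γ 5 * γ 6)) / (4 * σ * γ 0) := by
      have : (0:ℝ) < 4 * σ - (γ 0 * γ 1 * γ 2 * γ 3 + γ 0 * γ 4 * γ 5 * γ 6) := by linarith
      positivity
    have hpos : 0 < Fq γ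
        ![1, γ 2 * γ 3 / 2, σ * γ 3 / γ 1, 2 * σ / (γ 1 * γ 2),
          γ 5 * γ 6 / 2, σ * γ 6 / γ 4, 2 * σ / (γ 4 * γ 5)] x := by
      by_contra hc
      push_neg at hc
      rw [key] at hc
      have n4 := mul_nonneg c4.le
        (sq_nonneg (x 3 + γ 1 * γ 2 * γ 3 / (4 * σ) * x 0 - γ 3 / 2 * x 2))
      have n3 := mul_nonneg c3.le
        (sq_nonneg (x 2 + γ 1 * γ 2 / (2 * σ) * x 0 - γ 2 * x 1))
      have nB1 := mul_nonneg cB1.le (sq_nonneg (x 1))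
      have n7 := mul_nonneg c7.le
        (sq_nonneg (x 6 + γ 4 * γ 5 * γ 6 / (4 * σ) * x 0 - γ 6 / 2 * x 5))
      have n6 := mul_nonneg c6.le
        (sq_nonneg (x 5 + γ 4 * γ 5 / (2 * σ) * x 0 - γ 5 * x 4))
      have nB2 := mul_nonneg cB2.le (sq_nonneg (x 4))
      have nA := mul_nonneg cA.le (sq_nonneg (x 0))
      have hx0 : x 0 = 0 := coeff_sq_zero cA (by linarith)
      have hx1 : x 1 = 0 := coeff_sq_zero cB1 (by linarith)
      have hx4 : x 4 = 0 := coeff_sq_zero cB2 (by linarith)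
      have hy3 : x 2 + γ 1 * γ 2 / (2 * σ) * x 0 - γ 2 * x 1 = 0 :=
        coeff_sq_zero c3 (by linarith)
      have hy4 : x 3 + γ 1 * γ 2 * γ 3 / (4 * σ) * x 0 - γ 3 / 2 * x 2 = 0 :=
        coeff_sq_zero c4 (by linarith)
      have hy6 : x 5 + γ 4 * γ 5 / (2 * σ) * x 0 - γ 5 * x 4 = 0 :=
        coeff_sq_zero c6 (by linarith)
      have hy7 : x 6 + γ 4 * γ 5 * γ 6 / (4 * σ) * x 0 - γ 6 / 2 * x 5 = 0 :=
        coeff_sq_zero c7 (by linarith)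
      have hx2 : x 2 = 0 := by
        rw [hx0, hx1] at hy3; simpa using hy3
      have hx3 : x 3 = 0 := by
        rw [hx0, hx2] at hy4; simpa using hy4
      have hx5 : x 5 = 0 := by
        rw [hx0, hx4] at hy6; simpa using hy6
      have hx6 : x 6 = 0 := by
        rw [hx0, hx5] at hy7; simpa using hy7
      exact hx (funext fun i => by
        fin_cases i <;>
          first
            | exact hx0 | exact hx1 | exact hx2 | exact hx3
            | exact hx4 | exact hx5 | exact hx6)
    linarith

end BranchedSecant

namespace BranchedSecant

lemma lemA {m n P S : ℝ} (hm : 0 < m) (hn : 0 < n) (hP : 0 < P) (hS : 0 < S)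
    (hC : m * S + n * P ≤ 4 * P * S) :
    (m ^ 2 + n ^ 2 + 6 * m * n) * P * S ≤
      4 * m * P ^ 2 * S + 4 * n * P * S ^ 2 + m ^ 2 * n * S + m * n ^ 2 * P := by
  have hC0 : 0 ≤ 4 * P * S - m * S - n * P := by linarith
  have hXm : 0 < 4 * P - m := by
    have h1 : m * S < 4 * P * S := by nlinarith [mul_pos hn hP]
    nlinarith [hS]
  have hpis : 0 ≤ 4 * P * S * (4 * P * S - m * S - n * P) + n * S * (2 * P - m) ^ 2
      + m * P * (2 * S - n) ^ 2 := by
    have h1 : 0 ≤ 4 * P * S * (4 * P * S - m * S - n * P) :=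
      mul_nonneg (by positivity) hC0
    have h2 : 0 ≤ n * S * (2 * P - m) ^ 2 := by positivity
    have h3 : 0 ≤ m * P * (2 * S - n) ^ 2 := by positivity
    linarith
  have key : 4 * m * P * S * (4 * P - m) *
      ((4 * m * P ^ 2 * S + 4 * n * P * S ^ 2 + m ^ 2 * n * S + m * n ^ 2 * P)
        - (m ^ 2 + n ^ 2 + 6 * m * n) * P * S)
      = m ^ 2 * (2 * P * S * (4 * P - m) - n * (2 * P * S + (4 * P * S - m * S - n * P))) ^ 2
        + m * n * (4 * P * S - m * S - n * P) *
          (4 * P * S * (4 * P * S - m * S - n * P) + n * S * (2 * P - m) ^ 2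
            + m * P * (2 * S - n) ^ 2) := by ring
  have hrhs : 0 ≤ m ^ 2 * (2 * P * S * (4 * P - m)
      - n * (2 * P * S + (4 * P * S - m * S - n * P))) ^ 2
      + m * n * (4 * P * S - m * S - n * P) *
        (4 * P * S * (4 * P * S - m * S - n * P) + n * S * (2 * P - m) ^ 2
          + m * P * (2 * S - n) ^ 2) := by
    have h1 : 0 ≤ m ^ 2 * (2 * P * S * (4 * P - m)
        - n * (2 * P * S + (4 * P * S - m * S - n * P))) ^ 2 := by positivity
    have h2 : 0 ≤ m * n * (4 * P * S - m * S - n * P) :=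
      mul_nonneg (mul_nonneg hm.le hn.le) hC0
    have h3 := mul_nonneg h2 hpis
    linarith
  have hfac : 0 < 4 * m * P * S * (4 * P - m) := by positivity
  nlinarith [key, hrhs, hfac]

set_option maxHeartbeats 4000000 in
/-- scaled secant bound for one cycle -/
lemma cycle_delta {g1 g2 g3 D0 D1 D2 D3 : ℝ}
    (hg1 : 0 < g1) (hg2 : 0 < g2) (hg3 : 0 < g3)
    (hd0 : 0 < D0) (hd1 : 0 < D1) (hd2 : 0 < D2) (hd3 : 0 < D3)
    (hdet : 0 < 4 * D1 * D2 * D3 - g2 * g3 * D1 * D3 ^ 2 - g1 * g2 * D3 * D2 ^ 2) :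
    D0 * (g1 * g2 * g3) *
        (4 * D1 * D2 * D3 - g2 * g3 * D1 * D3 ^ 2 - g1 * g2 * D3 * D2 ^ 2) ≤
      4 * g1 * D1 ^ 2 * D2 * D3 - g1 * g2 * g3 * D1 ^ 2 * D3 ^ 2
        - 2 * g1 * g2 * g3 * D0 * D1 * D2 * D3 + 4 * g3 * D0 ^ 2 * D1 * D2
        - g1 * g2 * g3 * D0 ^ 2 * D2 ^ 2 := by
  have hm : 0 < D1 * D3 := mul_pos hd1 hd3
  have hn : 0 < D0 * D2 := mul_pos hd0 hd2
  have hP : 0 < D1 * D2 / (g2 * g3) := by positivity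
  have hS : 0 < D0 * D1 / (g1 * g2) := by positivity
  have hC : (D1 * D3) * (D0 * D1 / (g1 * g2)) + (D0 * D2) * (D1 * D2 / (g2 * g3)) ≤
      4 * (D1 * D2 / (g2 * g3)) * (D0 * D1 / (g1 * g2)) := by
    have hid : (4 * (D1 * D2 / (g2 * g3)) * (D0 * D1 / (g1 * g2))
          - (D1 * D3) * (D0 * D1 / (g1 * g2)) - (D0 * D2) * (D1 * D2 / (g2 * g3)))
          * (g1 * g2 ^ 2 * g3 * D3)
        = D0 * D1 *
          (4 * D1 * D2 * D3 - g2 * g3 * D1 * D3 ^ 2 - g1 * g2 * D3 * D2 ^ 2) := by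
      field_simp
    nlinarith [mul_pos (mul_pos hd0 hd1) hdet, hid,
      mul_pos (mul_pos (mul_pos hg1 (pow_pos hg2 2)) hg3) hd3]
  have hW := lemA hm hn hP hS hC
  have hid2 : ((4 * g1 * D1 ^ 2 * D2 * D3 - g1 * g2 * g3 * D1 ^ 2 * D3 ^ 2
        - 2 * g1 * g2 * g3 * D0 * D1 * D2 * D3 + 4 * g3 * D0 ^ 2 * D1 * D2
        - g1 * g2 * g3 * D0 ^ 2 * D2 ^ 2)
      - D0 * (g1 * g2 * g3) *
        (4 * D1 * D2 * D3 - g2 * g3 * D1 * D3 ^ 2 - g1 * g2 * D3 * D2 ^ 2))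
      * (4 * (D1 * D2 / (g2 * g3)) * (D0 * D1 / (g1 * g2)))
      = 4 * (g1 * g2 * g3) *
        ((4 * (D1 * D3) * (D1 * D2 / (g2 * g3)) ^ 2 * (D0 * D1 / (g1 * g2))
          + 4 * (D0 * D2) * (D1 * D2 / (g2 * g3)) * (D0 * D1 / (g1 * g2)) ^ 2
          + (D1 * D3) ^ 2 * (D0 * D2) * (D0 * D1 / (g1 * g2))
          + (D1 * D3) * (D0 * D2) ^ 2 * (D1 * D2 / (g2 * g3)))
        - ((D1 * D3) ^ 2 + (D0 * D2) ^ 2 + 6 * (D1 * D3) * (D0 * D2))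
            * (D1 * D2 / (g2 * g3)) * (D0 * D1 / (g1 * g2))) := by
    field_simp
    ring
  have hWdiff : 0 ≤ (4 * (D1 * D3) * (D1 * D2 / (g2 * g3)) ^ 2 * (D0 * D1 / (g1 * g2))
      + 4 * (D0 * D2) * (D1 * D2 / (g2 * g3)) * (D0 * D1 / (g1 * g2)) ^ 2
      + (D1 * D3) ^ 2 * (D0 * D2) * (D0 * D1 / (g1 * g2))
      + (D1 * D3) * (D0 * D2) ^ 2 * (D1 * D2 / (g2 * g3)))
      - ((D1 * D3) ^ 2 + (D0 * D2) ^ 2 + 6 * (D1 * D3) * (D0 * D2))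
          * (D1 * D2 / (g2 * g3)) * (D0 * D1 / (g1 * g2)) := by linarith
  have h1 : 0 ≤ ((4 * g1 * D1 ^ 2 * D2 * D3 - g1 * g2 * g3 * D1 ^ 2 * D3 ^ 2
        - 2 * g1 * g2 * g3 * D0 * D1 * D2 * D3 + 4 * g3 * D0 ^ 2 * D1 * D2
        - g1 * g2 * g3 * D0 ^ 2 * D2 ^ 2)
      - D0 * (g1 * g2 * g3) *
        (4 * D1 * D2 * D3 - g2 * g3 * D1 * D3 ^ 2 - g1 * g2 * D3 * D2 ^ 2))
      * (4 * (D1 * D2 / (g2 * g3)) * (D0 * D1 / (g1 * g2))) := by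
    rw [hid2]
    have : 0 ≤ 4 * (g1 * g2 * g3) := by positivity
    nlinarith [mul_nonneg this hWdiff]
  have h2 : 0 < 4 * (D1 * D2 / (g2 * g3)) * (D0 * D1 / (g1 * g2)) := by positivity
  nlinarith [h1, h2]

lemma Fq_vec (γ d : Fin 7 → ℝ) (b0 b1 b2 b3 b4 b5 b6 : ℝ) :
    Fq γ d ![b0, b1, b2, b3, b4, b5, b6] =
    (γ 0)⁻¹ * d 0 * b0 ^ 2 + (γ 1)⁻¹ * d 1 * b1 ^ 2 + (γ 2)⁻¹ * d 2 * b2 ^ 2 +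
    (γ 3)⁻¹ * d 3 * b3 ^ 2 + (γ 4)⁻¹ * d 4 * b4 ^ 2 + (γ 5)⁻¹ * d 5 * b5 ^ 2 +
    (γ 6)⁻¹ * d 6 * b6 ^ 2
    - d 1 * b0 * b1 - d 2 * b1 * b2 - d 3 * b2 * b3 + d 0 * b0 * b3
    - d 4 * b0 * b4 - d 5 * b4 * b5 - d 6 * b5 * b6 + d 0 * b0 * b6 := rfl

end BranchedSecant

namespace BranchedSecant

set_option maxHeartbeats 8000000 in
lemma forward (γ : Fin 7 → ℝ) (hγ : ∀ i, 0 < γ i)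
    (h : DiagStable (branchedE γ)) :
    γ 0 * γ 1 * γ 2 * γ 3 + γ 0 * γ 4 * γ 5 * γ 6 < 4 := by
  obtain ⟨d, hd, hneg⟩ := h
  have hg0 := hγ 0; have hg1 := hγ 1; have hg2 := hγ 2; have hg3 := hγ 3
  have hg4 := hγ 4; have hg5 := hγ 5; have hg6 := hγ 6
  have hd0 := hd 0; have hd1 := hd 1; have hd2 := hd 2; have hd3 := hd 3
  have hd4 := hd 4; have hd5 := hd 5; have hd6 := hd 6
  have hF : ∀ x : Fin 7 → ℝ, x ≠ 0 → 0 < Fq γ d x := by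
    intro x hx
    have := hneg x hx
    rw [quad_eval] at this
    linarith
  -- first cycle : minor positivity
  have hM21 : 0 < 4 * d 2 * d 3 - γ 2 * γ 3 * d 3 ^ 2 := by
    have hne : (![0, 0, γ 2 * d 3, 2 * d 2, 0, 0, 0] : Fin 7 → ℝ) ≠ 0 := by
      intro hzero
      have h3 := congrFun hzero 3
      rw [show (![0, 0, γ 2 * d 3, 2 * d 2, 0, 0, 0] : Fin 7 → ℝ) 3 = 2 * d 2 from rfl,
        show ((0 : Fin 7 → ℝ)) 3 = 0 from rfl] at h3
      nlinarith
    have hq := hF _ hne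
    rw [Fq_vec] at hq
    have hval : γ 3 * ((γ 0)⁻¹ * d 0 * 0 ^ 2 + (γ 1)⁻¹ * d 1 * 0 ^ 2 +
        (γ 2)⁻¹ * d 2 * (γ 2 * d 3) ^ 2 + (γ 3)⁻¹ * d 3 * (2 * d 2) ^ 2 +
        (γ 4)⁻¹ * d 4 * 0 ^ 2 + (γ 5)⁻¹ * d 5 * 0 ^ 2 + (γ 6)⁻¹ * d 6 * 0 ^ 2
        - d 1 * 0 * 0 - d 2 * 0 * (γ 2 * d 3) - d 3 * (γ 2 * d 3) * (2 * d 2) + d 0 * 0 * (2 * d 2)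
        - d 4 * 0 * 0 - d 5 * 0 * 0 - d 6 * 0 * 0 + d 0 * 0 * 0)
        = d 2 * (4 * d 2 * d 3 - γ 2 * γ 3 * d 3 ^ 2) := by
      field_simp
      ring
    nlinarith [mul_pos hg3 hq]
  have hDET1 : 0 < 4 * d 1 * d 2 * d 3 - γ 2 * γ 3 * d 1 * d 3 ^ 2 - γ 1 * γ 2 * d 3 * d 2 ^ 2 := by
    have hne : (![0, 2 * γ 1 * γ 2 * (4 * d 2 * d 3 - γ 2 * γ 3 * d 3 ^ 2),
        4 * γ 1 * γ 2 ^ 2 * d 2 * d 3, 2 * γ 1 * γ 2 ^ 2 * γ 3 * d 2 * d 3,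
        0, 0, 0] : Fin 7 → ℝ) ≠ 0 := by
      intro hzero
      have h1 := congrFun hzero 1
      rw [show (![0, 2 * γ 1 * γ 2 * (4 * d 2 * d 3 - γ 2 * γ 3 * d 3 ^ 2),
        4 * γ 1 * γ 2 ^ 2 * d 2 * d 3, 2 * γ 1 * γ 2 ^ 2 * γ 3 * d 2 * d 3,
        0, 0, 0] : Fin 7 → ℝ) 1 = 2 * γ 1 * γ 2 * (4 * d 2 * d 3 - γ 2 * γ 3 * d 3 ^ 2) from rfl,
        show ((0 : Fin 7 → ℝ)) 1 = 0 from rfl] at h1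
      nlinarith [mul_pos (mul_pos hg1 hg2) hM21]
    have hq := hF _ hne
    rw [Fq_vec] at hq
    have hval : ((γ 0)⁻¹ * d 0 * 0 ^ 2 +
        (γ 1)⁻¹ * d 1 * (2 * γ 1 * γ 2 * (4 * d 2 * d 3 - γ 2 * γ 3 * d 3 ^ 2)) ^ 2 +
        (γ 2)⁻¹ * d 2 * (4 * γ 1 * γ 2 ^ 2 * d 2 * d 3) ^ 2 +
        (γ 3)⁻¹ * d 3 * (2 * γ 1 * γ 2 ^ 2 * γ 3 * d 2 * d 3) ^ 2 +
        (γ 4)⁻¹ * d 4 * 0 ^ 2 + (γ 5)⁻¹ * d 5 * 0 ^ 2 + (γ 6)⁻¹ * d 6 * 0 ^ 2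
        - d 1 * 0 * (2 * γ 1 * γ 2 * (4 * d 2 * d 3 - γ 2 * γ 3 * d 3 ^ 2))
        - d 2 * (2 * γ 1 * γ 2 * (4 * d 2 * d 3 - γ 2 * γ 3 * d 3 ^ 2)) * (4 * γ 1 * γ 2 ^ 2 * d 2 * d 3)
        - d 3 * (4 * γ 1 * γ 2 ^ 2 * d 2 * d 3) * (2 * γ 1 * γ 2 ^ 2 * γ 3 * d 2 * d 3)
        + d 0 * 0 * (2 * γ 1 * γ 2 ^ 2 * γ 3 * d 2 * d 3)
        - d 4 * 0 * 0 - d 5 * 0 * 0 - d 6 * 0 * 0 + d 0 * 0 * 0)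
        = 4 * γ 1 * γ 2 ^ 2 *
          (4 * d 1 * d 2 * d 3 - γ 2 * γ 3 * d 1 * d 3 ^ 2 - γ 1 * γ 2 * d 3 * d 2 ^ 2) *
          (4 * d 2 * d 3 - γ 2 * γ 3 * d 3 ^ 2) := by
      field_simp
      ring
    rw [hval] at hq
    nlinarith [mul_pos (mul_pos hg1 (pow_pos hg2 2)) hM21]
  -- second cycle
  have hM22 : 0 < 4 * d 5 * d 6 - γ 5 * γ 6 * d 6 ^ 2 := by
    have hne : (![0, 0, 0, 0, 0, γ 5 * d 6, 2 * d 5] : Fin 7 → ℝ) ≠ 0 := by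
      intro hzero
      have h6 := congrFun hzero 6
      rw [show (![0, 0, 0, 0, 0, γ 5 * d 6, 2 * d 5] : Fin 7 → ℝ) 6 = 2 * d 5 from rfl,
        show ((0 : Fin 7 → ℝ)) 6 = 0 from rfl] at h6
      nlinarith
    have hq := hF _ hne
    rw [Fq_vec] at hq
    have hval : γ 6 * ((γ 0)⁻¹ * d 0 * 0 ^ 2 + (γ 1)⁻¹ * d 1 * 0 ^ 2 +
        (γ 2)⁻¹ * d 2 * 0 ^ 2 + (γ 3)⁻¹ * d 3 * 0 ^ 2 +
        (γ 4)⁻¹ * d 4 * 0 ^ 2 + (γ 5)⁻¹ * d 5 * (γ 5 * d 6) ^ 2 + (γ 6)⁻¹ * d 6 * (2 * d 5) ^ 2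
        - d 1 * 0 * 0 - d 2 * 0 * 0 - d 3 * 0 * 0 + d 0 * 0 * 0
        - d 4 * 0 * 0 - d 5 * 0 * (γ 5 * d 6) - d 6 * (γ 5 * d 6) * (2 * d 5) + d 0 * 0 * (2 * d 5))
        = d 5 * (4 * d 5 * d 6 - γ 5 * γ 6 * d 6 ^ 2) := by
      field_simp
      ring
    nlinarith [mul_pos hg6 hq]
  have hDET2 : 0 < 4 * d 4 * d 5 * d 6 - γ 5 * γ 6 * d 4 * d 6 ^ 2 - γ 4 * γ 5 * d 6 * d 5 ^ 2 := by
    have hne : (![0, 0, 0, 0, 2 * γ 4 * γ 5 * (4 * d 5 * d 6 - γ 5 * γ 6 * d 6 ^ 2),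
        4 * γ 4 * γ 5 ^ 2 * d 5 * d 6, 2 * γ 4 * γ 5 ^ 2 * γ 6 * d 5 * d 6] : Fin 7 → ℝ) ≠ 0 := by
      intro hzero
      have h4 := congrFun hzero 4
      rw [show (![0, 0, 0, 0, 2 * γ 4 * γ 5 * (4 * d 5 * d 6 - γ 5 * γ 6 * d 6 ^ 2),
        4 * γ 4 * γ 5 ^ 2 * d 5 * d 6, 2 * γ 4 * γ 5 ^ 2 * γ 6 * d 5 * d 6] : Fin 7 → ℝ) 4
          = 2 * γ 4 * γ 5 * (4 * d 5 * d 6 - γ 5 * γ 6 * d 6 ^ 2) from rfl,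
        show ((0 : Fin 7 → ℝ)) 4 = 0 from rfl] at h4
      nlinarith [mul_pos (mul_pos hg4 hg5) hM22]
    have hq := hF _ hne
    rw [Fq_vec] at hq
    have hval : ((γ 0)⁻¹ * d 0 * 0 ^ 2 + (γ 1)⁻¹ * d 1 * 0 ^ 2 +
        (γ 2)⁻¹ * d 2 * 0 ^ 2 + (γ 3)⁻¹ * d 3 * 0 ^ 2 +
        (γ 4)⁻¹ * d 4 * (2 * γ 4 * γ 5 * (4 * d 5 * d 6 - γ 5 * γ 6 * d 6 ^ 2)) ^ 2 +
        (γ 5)⁻¹ * d 5 * (4 * γ 4 * γ 5 ^ 2 * d 5 * d 6) ^ 2 +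
        (γ 6)⁻¹ * d 6 * (2 * γ 4 * γ 5 ^ 2 * γ 6 * d 5 * d 6) ^ 2
        - d 1 * 0 * 0 - d 2 * 0 * 0 - d 3 * 0 * 0 + d 0 * 0 * 0
        - d 4 * 0 * (2 * γ 4 * γ 5 * (4 * d 5 * d 6 - γ 5 * γ 6 * d 6 ^ 2))
        - d 5 * (2 * γ 4 * γ 5 * (4 * d 5 * d 6 - γ 5 * γ 6 * d 6 ^ 2)) * (4 * γ 4 * γ 5 ^ 2 * d 5 * d 6)
        - d 6 * (4 * γ 4 * γ 5 ^ 2 * d 5 * d 6) * (2 * γ 4 * γ 5 ^ 2 * γ 6 * d 5 * d 6)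
        + d 0 * 0 * (2 * γ 4 * γ 5 ^ 2 * γ 6 * d 5 * d 6))
        = 4 * γ 4 * γ 5 ^ 2 *
          (4 * d 4 * d 5 * d 6 - γ 5 * γ 6 * d 4 * d 6 ^ 2 - γ 4 * γ 5 * d 6 * d 5 ^ 2) *
          (4 * d 5 * d 6 - γ 5 * γ 6 * d 6 ^ 2) := by
      field_simp
      ring
    rw [hval] at hq
    nlinarith [mul_pos (mul_pos hg4 (pow_pos hg5 2)) hM22]

  -- main plug identity with abstract scalars A, B
  have hkey : ∀ A B : ℝ, γ 0 * ((γ 0)⁻¹ * d 0 * (2 * A * B) ^ 2 + (γ 1)⁻¹ * d 1 * (γ 1 * B * (d 1 * (4 * d 2 * d 3 - γ 2 * γ 3 * d 3 ^ 2) - γ 2 * γ 3 * d 0 * d 2 * d 3)) ^ 2 + (γ 2)⁻¹ * d 2 * (2 * γ 2 * B * (γ 1 * d 1 * d 2 * d 3 - γ 3 * d 0 * d 1 * d 3)) ^ 2 +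
      (γ 3)⁻¹ * d 3 * (γ 3 * B * (γ 1 * γ 2 * d 1 * d 2 * d 3 - 4 * d 0 * d 1 * d 2 + γ 1 * γ 2 * d 0 * d 2 ^ 2)) ^ 2 + (γ 4)⁻¹ * d 4 * (γ 4 * A * (d 4 * (4 * d 5 * d 6 - γ 5 * γ 6 * d 6 ^ 2) - γ 5 * γ 6 * d 0 * d 5 * d 6)) ^ 2 + (γ 5)⁻¹ * d 5 * (2 * γ 5 * A * (γ 4 * d 4 * d 5 * d 6 - γ 6 * d 0 * d 4 * d 6)) ^ 2 +
      (γ 6)⁻¹ * d 6 * (γ 6 * A * (γ 4 * γ 5 * d 4 * d 5 * d 6 - 4 * d 0 * d 4 * d 5 + γ 4 * γ 5 * d 0 * d 5 ^ 2)) ^ 2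
      - d 1 * (2 * A * B) * (γ 1 * B * (d 1 * (4 * d 2 * d 3 - γ 2 * γ 3 * d 3 ^ 2) - γ 2 * γ 3 * d 0 * d 2 * d 3)) - d 2 * (γ 1 * B * (d 1 * (4 * d 2 * d 3 - γ 2 * γ 3 * d 3 ^ 2) - γ 2 * γ 3 * d 0 * d 2 * d 3)) * (2 * γ 2 * B * (γ 1 * d 1 * d 2 * d 3 - γ 3 * d 0 * d 1 * d 3)) - d 3 * (2 * γ 2 * B * (γ 1 * d 1 * d 2 * d 3 - γ 3 * d 0 * d 1 * d 3)) * (γ 3 * B * (γ 1 * γ 2 * d 1 * d 2 * d 3 - 4 * d 0 * d 1 * d 2 + γ 1 * γ 2 * d 0 * d 2 ^ 2)) + d 0 * (2 * A * B) * (γ 3 * B * (γ 1 * γ 2 * d 1 * d 2 * d 3 - 4 * d 0 * d 1 * d 2 + γ 1 * γ 2 * d 0 * d 2 ^ 2))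
      - d 4 * (2 * A * B) * (γ 4 * A * (d 4 * (4 * d 5 * d 6 - γ 5 * γ 6 * d 6 ^ 2) - γ 5 * γ 6 * d 0 * d 5 * d 6)) - d 5 * (γ 4 * A * (d 4 * (4 * d 5 * d 6 - γ 5 * γ 6 * d 6 ^ 2) - γ 5 * γ 6 * d 0 * d 5 * d 6)) * (2 * γ 5 * A * (γ 4 * d 4 * d 5 * d 6 - γ 6 * d 0 * d 4 * d 6)) - d 6 * (2 * γ 5 * A * (γ 4 * d 4 * d 5 * d 6 - γ 6 * d 0 * d 4 * d 6)) * (γ 6 * A * (γ 4 * γ 5 * d 4 * d 5 * d 6 - 4 * d 0 * d 4 * d 5 + γ 4 * γ 5 * d 0 * d 5 ^ 2)) + d 0 * (2 * A * B) * (γ 6 * A * (γ 4 * γ 5 * d 4 * d 5 * d 6 - 4 * d 0 * d 4 * d 5 + γ 4 * γ 5 * d 0 * d 5 ^ 2)))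
      = 4 * d 0 * A ^ 2 * B ^ 2 + γ 0 * (4 * γ 1 * d 1 ^ 2 * d 2 * d 3 - γ 1 * γ 2 * γ 3 * d 1 ^ 2 * d 3 ^ 2 - 2 * γ 1 * γ 2 * γ 3 * d 0 * d 1 * d 2 * d 3 + 4 * γ 3 * d 0 ^ 2 * d 1 * d 2 - γ 1 * γ 2 * γ 3 * d 0 ^ 2 * d 2 ^ 2) * B ^ 2 * ((4 * d 1 * d 2 * d 3 - γ 2 * γ 3 * d 1 * d 3 ^ 2 - γ 1 * γ 2 * d 3 * d 2 ^ 2) - 2 * A)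
        + γ 0 * (4 * γ 4 * d 4 ^ 2 * d 5 * d 6 - γ 4 * γ 5 * γ 6 * d 4 ^ 2 * d 6 ^ 2 - 2 * γ 4 * γ 5 * γ 6 * d 0 * d 4 * d 5 * d 6 + 4 * γ 6 * d 0 ^ 2 * d 4 * d 5 - γ 4 * γ 5 * γ 6 * d 0 ^ 2 * d 5 ^ 2) * A ^ 2 * ((4 * d 4 * d 5 * d 6 - γ 5 * γ 6 * d 4 * d 6 ^ 2 - γ 4 * γ 5 * d 6 * d 5 ^ 2) - 2 * B) := by
    intro A B
    field_simp
    ring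
  have hΔ1 := cycle_delta hg1 hg2 hg3 hd0 hd1 hd2 hd3 hDET1
  have hΔ2 := cycle_delta hg4 hg5 hg6 hd0 hd4 hd5 hd6 hDET2
  set A : ℝ := 4 * d 1 * d 2 * d 3 - γ 2 * γ 3 * d 1 * d 3 ^ 2 - γ 1 * γ 2 * d 3 * d 2 ^ 2 with hAdef
  set B : ℝ := 4 * d 4 * d 5 * d 6 - γ 5 * γ 6 * d 4 * d 6 ^ 2 - γ 4 * γ 5 * d 6 * d 5 ^ 2 with hBdef
  set N1 : ℝ := 4 * γ 1 * d 1 ^ 2 * d 2 * d 3 - γ 1 * γ 2 * γ 3 * d 1 ^ 2 * d 3 ^ 2 - 2 * γ 1 * γ 2 * γ 3 * d 0 * d 1 * d 2 * d 3 + 4 * γ 3 * d 0 ^ 2 * d 1 * d 2 - γ 1 * γ 2 * γ 3 * d 0 ^ 2 * d 2 ^ 2 with hN1def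
  set N2 : ℝ := 4 * γ 4 * d 4 ^ 2 * d 5 * d 6 - γ 4 * γ 5 * γ 6 * d 4 ^ 2 * d 6 ^ 2 - 2 * γ 4 * γ 5 * γ 6 * d 0 * d 4 * d 5 * d 6 + 4 * γ 6 * d 0 ^ 2 * d 4 * d 5 - γ 4 * γ 5 * γ 6 * d 0 ^ 2 * d 5 ^ 2 with hN2def
  -- hΔ1 : d 0 * (γ 1 * γ 2 * γ 3) * A ≤ N1 (up to ring shape)
  have hne : (![2 * A * B, γ 1 * B * (d 1 * (4 * d 2 * d 3 - γ 2 * γ 3 * d 3 ^ 2) - γ 2 * γ 3 * d 0 * d 2 * d 3), 2 * γ 2 * B * (γ 1 * d 1 * d 2 * d 3 - γ 3 * d 0 * d 1 * d 3), γ 3 * B * (γ 1 * γ 2 * d 1 * d 2 * d 3 - 4 * d 0 * d 1 * d 2 + γ 1 * γ 2 * d 0 * d 2 ^ 2), γ 4 * A * (d 4 * (4 * d 5 * d 6 - γ 5 * γ 6 * d 6 ^ 2) - γ 5 * γ 6 * d 0 * d 5 * d 6), 2 * γ 5 * A * (γ 4 * d 4 * d 5 * d 6 - γ 6 * d 0 *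 d 4 * d 6), γ 6 * A * (γ 4 * γ 5 * d 4 * d 5 * d 6 - 4 * d 0 * d 4 * d 5 + γ 4 * γ 5 * d 0 * d 5 ^ 2)] : Fin 7 → ℝ) ≠ 0 := by
    intro hzero
    have h0 := congrFun hzero 0
    rw [show (![2 * A * B, γ 1 * B * (d 1 * (4 * d 2 * d 3 - γ 2 * γ 3 * d 3 ^ 2) - γ 2 * γ 3 * d 0 * d 2 * d 3), 2 * γ 2 * B * (γ 1 * d 1 * d 2 * d 3 - γ 3 * d 0 * d 1 * d 3), γ 3 * B * (γ 1 * γ 2 * d 1 * d 2 * d 3 - 4 * d 0 * d 1 * d 2 + γ 1 * γ 2 * d 0 * d 2 ^ 2), γ 4 * A * (d 4 * (4 * d 5 * d 6 - γ 5 * γ 6 * d 6 ^ 2) - γ 5 * γ 6 * d 0 * d 5 * d 6), 2 * γ 5 * A * (γ 4 * d 4 * d 5 * d 6 - γ 6 * d 0 * d 4 * d 6), γ 6 * A * (γ 4 * γ 5 * d 4 * d 5 * d 6 - 4 * d 0 * d 4 * d 5 + γ 4 * γ 5 * d 0 * d 5 ^ 2)] : Fin 7 → ℝ) 0 = 2 *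 A * B from rfl,
      show ((0 : Fin 7 → ℝ)) 0 = 0 from rfl] at h0
    nlinarith [mul_pos hDET1 hDET2]
  have hq := hF _ hne
  rw [Fq_vec] at hq
  have hq2 := mul_pos hg0 hq
  rw [hkey A B] at hq2
  clear hq hkey hne hF hneg hd hγ
  have hA : 0 < A := by rw [hAdef]; exact hDET1
  have hB : 0 < B := by rw [hBdef]; exact hDET2
  clear hDET1 hDET2 hM21 hM22 hAdef hBdef hN1def hN2def
  have hT : 0 < 4 * d 0 * A * B - γ 0 * N1 * B - γ 0 * N2 * A := by
    have hr : (4 * d 0 * A * B - γ 0 * N1 * B - γ 0 * N2 * A) * (A * B)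
        = 4 * d 0 * A ^ 2 * B ^ 2 + γ 0 * N1 * B ^ 2 * (A - 2 * A)
          + γ 0 * N2 * A ^ 2 * (B - 2 * B) := by ring
    nlinarith [hq2, hr, mul_pos hA hB]
  have k1 := mul_le_mul_of_nonneg_left (mul_le_mul_of_nonneg_right hΔ1 hB.le) hg0.le
  have k2 := mul_le_mul_of_nonneg_left (mul_le_mul_of_nonneg_right hΔ2 hA.le) hg0.le
  have hstep : 0 < 4 * d 0 * A * B - γ 0 * (d 0 * (γ 1 * γ 2 * γ 3) * A) * B
      - γ 0 * (d 0 * (γ 4 * γ 5 * γ 6) * B) * A := by nlinarith [hT, k1, k2]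
  nlinarith [hstep, mul_pos (mul_pos hd0 hA) hB]

end BranchedSecant

open BranchedSecant in
theorem branched_diag_stable_iff (γ : Fin 7 → ℝ) (hγ : ∀ i, 0 < γ i) :
    DiagStable (branchedE γ) ↔
      γ 0 * γ 1 * γ 2 * γ 3 + γ 0 * γ 4 * γ 5 * γ 6 < 4 := by
  exact ⟨forward γ hγ, backward γ hγ⟩
end

section
/- Let γ_1,...,γ_7>0 with γ_1γ_2γ_3γ_4 + γ_1γ_5γ_6γ_7 < 4, let E be the branched dissipativity matrix as above, and let D = diag(1, γ_3γ_4/2, γ_4/γ_2, 2/(γ_2γ_3), γ_6γ_7/2, γ_7/γ_5, 2/(γ_5γ_6)). Then EᵀD + DE ≤ 0 (negative semidefinite). -/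
open Matrix

def NegSemidefQ {n : Type*} [Fintype n] (M : Matrix n n ℝ) : Prop :=
  ∀ x : n → ℝ, x ⬝ᵥ M.mulVec x ≤ 0

set_option maxHeartbeats 12000000 in
theorem branched_explicit_D_neg_semidef (γ : Fin 7 → ℝ) (hγ : ∀ i, 0 < γ i)
    (hsec : γ 0 * γ 1 * γ 2 * γ 3 + γ 0 * γ 4 * γ 5 * γ 6 < 4)
    (D : Matrix (Fin 7) (Fin 7) ℝ)
    (hD : D = diagonal ![1, γ 2 * γ 3 / 2, γ 3 / γ 1, 2 / (γ 1 * γ 2),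
                         γ 5 * γ 6 / 2, γ 6 / γ 4, 2 / (γ 4 * γ 5)]) :
    NegSemidefQ ((branchedE γ)ᵀ * D + D * branchedE γ) := by
  intro x
  have h0 := hγ 0
  have h1 := hγ 1
  have h2 := hγ 2
  have h3 := hγ 3
  have h4 := hγ 4
  have h5 := hγ 5
  have h6 := hγ 6
  have hP0 : (0:ℝ) ≤ 2*γ 1*γ 2*γ 3*γ 4*γ 5*γ 6*(4-(γ 0*γ 1*γ 2*γ 3 + γ 0*γ 4*γ 5*γ 6))*(x 0)^2 := by
    have h : 0 < 4 - (γ 0*γ 1*γ 2*γ 3 + γ 0*γ 4*γ 5*γ 6) := by linarith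
    positivity
  have hP1 : (0:ℝ) ≤ γ 0*(γ 3)^2*γ 4*γ 5*γ 6*(2*γ 2*x 1-2*x 2-γ 1*γ 2*x 0)^2 := by positivity
  have hP2 : (0:ℝ) ≤ γ 0*γ 4*γ 5*γ 6*(2*γ 3*x 2-4*x 3-γ 1*γ 2*γ 3*x 0)^2 := by positivity
  have hP3 : (0:ℝ) ≤ γ 0*γ 1*γ 2*γ 3*(γ 6)^2*(2*γ 5*x 4-2*x 5-γ 4*γ 5*x 0)^2 := by positivity
  have hP4 : (0:ℝ) ≤ γ 0*γ 1*γ 2*γ 3*(2*γ 6*x 5-4*x 6-γ 4*γ 5*γ 6*x 0)^2 := by positivity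
  have hC : (0:ℝ) < 4*γ 0*γ 1*γ 2*γ 3*γ 4*γ 5*γ 6 := by positivity
  have heq : (4*γ 0*γ 1*γ 2*γ 3*γ 4*γ 5*γ 6) * (x ⬝ᵥ ((branchedE γ)ᵀ * D + D * branchedE γ).mulVec x) =
      -(2*γ 1*γ 2*γ 3*γ 4*γ 5*γ 6*(4-(γ 0*γ 1*γ 2*γ 3 + γ 0*γ 4*γ 5*γ 6))*(x 0)^2
        + γ 0*(γ 3)^2*γ 4*γ 5*γ 6*(2*γ 2*x 1-2*x 2-γ 1*γ 2*x 0)^2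
        + γ 0*γ 4*γ 5*γ 6*(2*γ 3*x 2-4*x 3-γ 1*γ 2*γ 3*x 0)^2
        + γ 0*γ 1*γ 2*γ 3*(γ 6)^2*(2*γ 5*x 4-2*x 5-γ 4*γ 5*x 0)^2
        + γ 0*γ 1*γ 2*γ 3*(2*γ 6*x 5-4*x 6-γ 4*γ 5*γ 6*x 0)^2) := by
    have e3 : (Fin.succ (2:Fin 6)) = (3:Fin 7) := rfl
    have e4 : ((Fin.succ (2:Fin 5)).succ) = (4:Fin 7) := rfl
    have e5 : (((Fin.succ (2:Fin 4)).succ).succ) = (5:Fin 7) := rfl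
    have e6 : ((((Fin.succ (2:Fin 3)).succ).succ).succ) = (6:Fin 7) := rfl
    rw [hD, Matrix.add_mulVec, ← Matrix.mulVec_mulVec, ← Matrix.mulVec_mulVec,
      dotProduct_add]
    simp [branchedE, Matrix.mulVec, dotProduct, Fin.sum_univ_succ,
      Matrix.mulVec_diagonal, Matrix.cons_val_zero, Matrix.cons_val_succ,
      Matrix.diagonal_apply, Fin.succ_ne_zero, Fin.succ_inj, ne_eq, e3, e4, e5, e6]
    field_simp
    ring
  have hQC : (4*γ 0*γ 1*γ 2*γ 3*γ 4*γ 5*γ 6) *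
      (x ⬝ᵥ ((branchedE γ)ᵀ * D + D * branchedE γ).mulVec x) ≤
      (4*γ 0*γ 1*γ 2*γ 3*γ 4*γ 5*γ 6) * 0 := by
    rw [heq, mul_zero]; linarith
  exact le_of_mul_le_mul_left hQC hC
end

section
/- Let Ê be the 7×7 matrix obtained as diag(γ_1,...,γ_7)·E for the branched dissipativity matrix E; i.e., Ê has all diagonal entries -1 and off-diagonal entries ±γ_l placed as in E. Then the characteristic polynomial of Ê equals (s+1)^3 [(s+1)^4 + k], where k = γ_1γ_2γ_3γ_4 + γ_1γ_5γ_6γ_7. -/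
/-!
Every diagonal entry of `branchedE γ` is `-(γ l)⁻¹`, so left multiplication by `diagonal γ` makes the
diagonal `-1` and leaves the off-diagonal entries `±γ l`. The characteristic matrix is thus `X + 1`
on the diagonal plus two feedback loops of length four through the first node,
`0 → 1 → 2 → 3 → 0` and `0 → 4 → 5 → 6 → 0`; expanding along the first row, each loop contributes
its gain times `(X + 1) ^ 3`.
-/

open Matrix Polynomial

theorem det_two_feedback_loops {R : Type*} [CommRing R] (x a b c d e f g : R) :
    det !![x, 0, 0, a, 0, 0, a;
           -b, x, 0, 0, 0, 0, 0;
           0, -c, x, 0, 0, 0, 0;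
           0, 0, -d, x, 0, 0, 0;
           -e, 0, 0, 0, x, 0, 0;
           0, 0, 0, 0, -f, x, 0;
           0, 0, 0, 0, 0, -g, x] = x ^ 3 * (x ^ 4 + a * (b * c * d + e * f * g)) := by
  simp [det_succ_row_zero, Fin.sum_univ_succ, Fin.succAbove]
  ring

theorem charmatrix_diagonal_mul_branchedE {γ : Fin 7 → ℝ} (hγ : ∀ i, γ i ≠ 0) :
    charmatrix (diagonal γ * branchedE γ) =
      !![X + 1, 0, 0, C (γ 0), 0, 0, C (γ 0);
         -C (γ 1), X + 1, 0, 0, 0, 0, 0;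
         0, -C (γ 2), X + 1, 0, 0, 0, 0;
         0, 0, -C (γ 3), X + 1, 0, 0, 0;
         -C (γ 4), 0, 0, 0, X + 1, 0, 0;
         0, 0, 0, 0, -C (γ 5), X + 1, 0;
         0, 0, 0, 0, 0, -C (γ 6), X + 1] := by
  have hinv : ∀ i, γ i * (γ i)⁻¹ = 1 := fun i => mul_inv_cancel₀ (hγ i)
  ext i j
  fin_cases i <;> fin_cases j <;> simp [branchedE, diagonal_mul, hinv]

theorem branched_hatE_charpoly (γ : Fin 7 → ℝ) (hγ : ∀ i, 0 < γ i) :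
    (Matrix.diagonal γ * branchedE γ).charpoly =
      (X + 1) ^ 3 * ((X + 1) ^ 4 +
        C (γ 0 * γ 1 * γ 2 * γ 3 + γ 0 * γ 4 * γ 5 * γ 6)) := by
  rw [charpoly, charmatrix_diagonal_mul_branchedE fun i => (hγ i).ne', det_two_feedback_loops]
  simp only [map_add, map_mul]
  ring
end

section
/- (I/O passivity lemma) Let Σ_i: L²_e → L²_e, i=1,...,M, satisfy ‖(y_i)_T‖² ≤ γ_i ⟨(y_i)_T,(u_i)_T⟩ for all T>0 with γ_i>0, and let the interconnection be u = v + A y for an M×M real matrix A. Set E = A − Γ where Γ = diag(1/γ_1,...,1/γ_M). If there exists a positive diagonal matrix D with DE + EᵀD negative definite, then there exists ρ>0 such that for all u, v, y satisfying the passivity inequalities and u=v+Ay, one has ‖y_T‖ ≤ ρ ‖v_T‖ for all T>0. -/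
/-!
With `D = diagonal d`, the interconnection `u = v + A y` turns the `D`-weighted sum of the
excess supplies `yᵢ (uᵢ - yᵢ / γᵢ)` into `∑ dᵢ yᵢ vᵢ + yᵀ D E y` at every instant. Negative
definiteness of the symmetric part of `D E` is uniform by compactness of the unit sphere,
`yᵀ D E y ≤ -α |y|²`, and Young's inequality absorbs the cross term:
`∑ dᵢ yᵢ vᵢ ≤ α/2 |y|² + α/2 (δ/α)² |v|²` when `|dᵢ| ≤ δ`. Integrating over `(0, T]`, passivity
makes the integrated supply nonnegative, so `‖y_T‖² ≤ (δ/α)² ‖v_T‖²`.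
-/

open Matrix MeasureTheory

section QuadraticForm

variable {n : Type*} [Fintype n]

theorem dotProduct_add_transpose_mulVec (B : Matrix n n ℝ) (x : n → ℝ) :
    x ⬝ᵥ (B + Bᵀ) *ᵥ x = 2 * (x ⬝ᵥ B *ᵥ x) := by
  rw [add_mulVec, dotProduct_add, dotProduct_mulVec x Bᵀ, vecMul_transpose, dotProduct_comm]
  ring

theorem NegDefQ.of_add_transpose {B : Matrix n n ℝ} (h : NegDefQ (B + Bᵀ)) : NegDefQ B :=
  fun x hx => by linarith [h x hx, dotProduct_add_transpose_mulVec B x]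

theorem smul_dotProduct_mulVec_smul (B : Matrix n n ℝ) (c : ℝ) (x : n → ℝ) :
    (c • x) ⬝ᵥ B *ᵥ (c • x) = c ^ 2 * (x ⬝ᵥ B *ᵥ x) := by
  rw [mulVec_smul, smul_dotProduct, dotProduct_smul, smul_eq_mul, smul_eq_mul]
  ring

theorem NegDefQ.exists_le_neg_mul_sum_sq {B : Matrix n n ℝ} (hB : NegDefQ B) :
    ∃ α > 0, ∀ x : n → ℝ, x ⬝ᵥ B *ᵥ x ≤ -α * ∑ i, x i ^ 2 := by
  let q : EuclideanSpace ℝ n → ℝ := fun z => -(z.ofLp ⬝ᵥ B *ᵥ z.ofLp)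
  have hq : Continuous q := by fun_prop
  obtain ⟨α, hα, hαq⟩ := (isCompact_sphere (0 : EuclideanSpace ℝ n) 1).exists_forall_le'
    hq.continuousOn (a := 0) fun z hz => by
      have hz0 : z.ofLp ≠ 0 := fun h => by simp_all
      simpa [q] using hB _ hz0
  refine ⟨α, hα, fun x => ?_⟩
  rcases eq_or_ne x 0 with rfl | hx
  · simp
  set z : EuclideanSpace ℝ n := WithLp.toLp 2 x
  have hz : 0 < ‖z‖ := norm_pos_iff.mpr (by simpa [z] using hx)
  have hsq : ‖z‖ ^ 2 = ∑ i, x i ^ 2 := EuclideanSpace.real_norm_sq_eq z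
  have hunit := hαq (‖z‖⁻¹ • z) (by simp [norm_smul, hz.ne'])
  have hx_eq : ‖z‖ • (‖z‖⁻¹ • z).ofLp = x := by simp [smul_smul, hz.ne', z]
  rw [← hsq, ← hx_eq, smul_dotProduct_mulVec_smul]
  nlinarith [sq_nonneg ‖z‖]

end QuadraticForm

section Interconnection

variable {ι : Type*} [Fintype ι]

theorem sum_mul_mul_le_of_abs_le {α δ : ℝ} (hα : 0 < α) {d y v : ι → ℝ} (hd : ∀ i, |d i| ≤ δ) :
    ∑ i, d i * y i * v i ≤ α / 2 * ∑ i, y i ^ 2 + α / 2 * (δ / α) ^ 2 * ∑ i, v i ^ 2 := by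
  rw [Finset.mul_sum, Finset.mul_sum, ← Finset.sum_add_distrib]
  refine Finset.sum_le_sum fun i _ => ?_
  have hd2 : d i ^ 2 ≤ δ ^ 2 := sq_le_sq' (abs_le.mp (hd i)).1 (abs_le.mp (hd i)).2
  have hgap : α / 2 * y i ^ 2 + α / 2 * (δ / α) ^ 2 * v i ^ 2 - d i * y i * v i =
      ((α * y i - d i * v i) ^ 2 + (δ ^ 2 - d i ^ 2) * v i ^ 2) / (2 * α) := by
    field_simp
    ring
  have : 0 ≤ ((α * y i - d i * v i) ^ 2 + (δ ^ 2 - d i ^ 2) * v i ^ 2) / (2 * α) := by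
    have := sub_nonneg.2 hd2
    positivity
  linarith

theorem sum_mul_supply_eq [DecidableEq ι] {d γ y u v : ι → ℝ} {A : Matrix ι ι ℝ}
    (hu : ∀ i, u i = v i + ∑ j, A i j * y j) :
    ∑ i, d i * (y i * u i - (γ i)⁻¹ * y i ^ 2) =
      ∑ i, d i * y i * v i + y ⬝ᵥ (diagonal d * (A - diagonal fun i => (γ i)⁻¹)) *ᵥ y := by
  simp only [← mulVec_mulVec, sub_mulVec, dotProduct, ← Finset.sum_add_distrib]
  refine Finset.sum_congr rfl fun i _ => ?_
  simp only [mulVec_diagonal, Pi.sub_apply, hu]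
  simp only [mulVec, dotProduct]
  ring

theorem sum_mul_supply_add_le [DecidableEq ι] {α δ : ℝ} (hα : 0 < α) {d γ y u v : ι → ℝ}
    {A : Matrix ι ι ℝ} (hd : ∀ i, |d i| ≤ δ)
    (hQ : y ⬝ᵥ (diagonal d * (A - diagonal fun i => (γ i)⁻¹)) *ᵥ y ≤ -α * ∑ i, y i ^ 2)
    (hu : ∀ i, u i = v i + ∑ j, A i j * y j) :
    ∑ i, d i * (y i * u i - (γ i)⁻¹ * y i ^ 2) + α / 2 * ∑ i, y i ^ 2 ≤
      α / 2 * (δ / α) ^ 2 * ∑ i, v i ^ 2 := by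
  rw [sum_mul_supply_eq hu]
  linarith [sum_mul_mul_le_of_abs_le hα (y := y) (v := v) hd]

end Interconnection

section Integral

variable {X ι : Type*} [MeasurableSpace X] {μ : Measure X} {d γ : ι → ℝ}
  {y u : ι → X → ℝ}

theorem integrable_mul_supply (hy : ∀ i, Integrable (fun t => y i t ^ 2) μ)
    (hyu : ∀ i, Integrable (fun t => y i t * u i t) μ) (i : ι) :
    Integrable (fun t => d i * (y i t * u i t - (γ i)⁻¹ * y i t ^ 2)) μ :=
  ((hyu i).sub ((hy i).const_mul _)).const_mul _

theorem integral_sum_mul_supply_nonneg [Fintype ι] (hd : ∀ i, 0 ≤ d i) (hγ : ∀ i, 0 < γ i)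
    (hy : ∀ i, Integrable (fun t => y i t ^ 2) μ)
    (hyu : ∀ i, Integrable (fun t => y i t * u i t) μ)
    (hpass : ∀ i, ∫ t, y i t ^ 2 ∂μ ≤ γ i * ∫ t, y i t * u i t ∂μ) :
    0 ≤ ∫ t, ∑ i, d i * (y i t * u i t - (γ i)⁻¹ * y i t ^ 2) ∂μ := by
  rw [integral_finsetSum _ fun i _ => integrable_mul_supply hy hyu i]
  refine Finset.sum_nonneg fun i _ => ?_
  rw [integral_const_mul, integral_sub (hyu i) ((hy i).const_mul _), integral_const_mul]
  have : (γ i)⁻¹ * ∫ t, y i t ^ 2 ∂μ ≤ ∫ t, y i t * u i t ∂μ :=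
    (inv_mul_le_iff₀ (hγ i)).mpr (hpass i)
  exact mul_nonneg (hd i) (sub_nonneg.mpr this)

end Integral

theorem io_passivity_lemma (M : ℕ) (γ : Fin M → ℝ) (hγ : ∀ i, 0 < γ i)
    (A : Matrix (Fin M) (Fin M) ℝ)
    (E : Matrix (Fin M) (Fin M) ℝ)
    (hE : E = A - Matrix.diagonal fun i => (γ i)⁻¹)
    (d : Fin M → ℝ) (hd : ∀ i, 0 < d i)
    (hdiag : NegDefQ (Matrix.diagonal d * E + Eᵀ * Matrix.diagonal d)) :
    ∃ ρ > 0, ∀ u v y : Fin M → ℝ → ℝ,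
      -- membership in L²_e : squares and cross products locally integrable
      (∀ i (T : ℝ), IntegrableOn (fun t => (y i t) ^ 2) (Set.Ioc 0 T)) →
      (∀ i (T : ℝ), IntegrableOn (fun t => (v i t) ^ 2) (Set.Ioc 0 T)) →
      (∀ i (T : ℝ), IntegrableOn (fun t => y i t * u i t) (Set.Ioc 0 T)) →
      (∀ i (T : ℝ), IntegrableOn (fun t => y i t * v i t) (Set.Ioc 0 T)) →
      -- strict passivity of each subsystem
      (∀ i (T : ℝ), 0 < T →
        (∫ t in Set.Ioc 0 T, (y i t) ^ 2) ≤
          γ i * ∫ t in Set.Ioc 0 T, y i t * u i t) →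
      -- interconnection u = v + A y
      (∀ i t, u i t = v i t + ∑ j, A i j * y j t) →
      ∀ T : ℝ, 0 < T →
        Real.sqrt (∫ t in Set.Ioc 0 T, ∑ i, (y i t) ^ 2) ≤
          ρ * Real.sqrt (∫ t in Set.Ioc 0 T, ∑ i, (v i t) ^ 2) := by
  subst hE
  have hB : NegDefQ (diagonal d * (A - diagonal fun i => (γ i)⁻¹)) :=
    NegDefQ.of_add_transpose (by rwa [transpose_mul, diagonal_transpose])
  obtain ⟨α, hα, hQ⟩ := hB.exists_le_neg_mul_sum_sq
  set δ := ∑ i, |d i| + 1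
  have hδ : ∀ i, |d i| ≤ δ := fun i => by
    linarith [Finset.single_le_sum (fun j _ => abs_nonneg (d j)) (Finset.mem_univ i)]
  refine ⟨δ / α, by positivity, fun u v y hy hv hyu _ hpass hu T hT => ?_⟩
  have hpt := fun t => sum_mul_supply_add_le hα hδ (hQ fun i => y i t) fun i => hu i t
  have hsupply := integrable_finsetSum Finset.univ fun i _ =>
    integrable_mul_supply (d := d) (γ := γ) (fun i => hy i T) (fun i => hyu i T) i
  have hY := integrable_finsetSum Finset.univ fun i _ => hy i T
  have hV := integrable_finsetSum Finset.univ fun i _ => hv i T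
  have hint : ∫ t in Set.Ioc 0 T,
        (∑ i, d i * (y i t * u i t - (γ i)⁻¹ * y i t ^ 2) + α / 2 * ∑ i, y i t ^ 2) ≤
      ∫ t in Set.Ioc 0 T, α / 2 * (δ / α) ^ 2 * ∑ i, v i t ^ 2 :=
    integral_mono (hsupply.add (hY.const_mul _)) (hV.const_mul _) hpt
  rw [integral_add hsupply (hY.const_mul _), integral_const_mul, integral_const_mul] at hint
  have h0 := integral_sum_mul_supply_nonneg (fun i => (hd i).le) hγ (fun i => hy i T)
    (fun i => hyu i T) (fun i => hpass i T hT)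
  refine Real.sqrt_le_iff.mpr ⟨by positivity, ?_⟩
  rw [mul_pow, Real.sq_sqrt (integral_nonneg fun t => by positivity)]
  exact le_of_mul_le_mul_left (by linarith) (by positivity : 0 < α / 2)
end

section
/- A finite-dimensional version of the passivity lemma: let y, v ∈ ℝ^M, γ_i>0, A ∈ ℝ^{M×M}, u = v + Ay, and suppose y_i(u_i − y_i/γ_i) ≥ 0 for each i. If D is a positive diagonal matrix and α>0 satisfy DE + EᵀD ≤ −2αI with E = A − diag(1/γ_1,...,1/γ_M), then α‖y‖² ≤ ⟨Dy, v⟩, hence ‖y‖ ≤ (‖D‖/α)‖v‖. -/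
open Matrix

theorem fin_dim_passivity_lemma (M : ℕ) (γ : Fin M → ℝ) (hγ : ∀ i, 0 < γ i)
    (A : Matrix (Fin M) (Fin M) ℝ)
    (E : Matrix (Fin M) (Fin M) ℝ)
    (hE : E = A - Matrix.diagonal fun i => (γ i)⁻¹)
    (d : Fin M → ℝ) (hd : ∀ i, 0 < d i) (α : ℝ) (hα : 0 < α)
    (hM : ∀ x : Fin M → ℝ,
      x ⬝ᵥ (Matrix.diagonal d * E + Eᵀ * Matrix.diagonal d).mulVec x ≤
        -2 * α * (x ⬝ᵥ x))
    (y v u : Fin M → ℝ) (hu : u = v + A.mulVec y)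
    (hpass : ∀ i, 0 ≤ y i * (u i - y i / γ i)) :
    α * (y ⬝ᵥ y) ≤ (fun i => d i * y i) ⬝ᵥ v ∧
      Real.sqrt (y ⬝ᵥ y) ≤ (‖d‖ / α) * Real.sqrt (v ⬝ᵥ v) := by
  -- E y in coordinates:  (E.mulVec y) i = u i - v i - y i / γ i
  have hEy : ∀ i, E.mulVec y i = u i - v i - y i / γ i := by
    intro i
    have : A.mulVec y i = u i - v i := by rw [hu]; simp [Pi.add_apply]
    simp [hE, Matrix.sub_mulVec, this, Matrix.mulVec_diagonal, div_eq_inv_mul, mul_comm]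
  -- quadratic form equality
  have hquad : y ⬝ᵥ (Matrix.diagonal d * E + Eᵀ * Matrix.diagonal d).mulVec y
      = 2 * ∑ i, d i * y i * E.mulVec y i := by
    rw [Matrix.add_mulVec, dotProduct_add, ← Matrix.mulVec_mulVec, ← Matrix.mulVec_mulVec,
      Matrix.dotProduct_mulVec y Eᵀ, Matrix.vecMul_transpose]
    simp only [dotProduct, Matrix.mulVec_diagonal]
    rw [two_mul, ← Finset.sum_add_distrib, ← Finset.sum_add_distrib]
    exact Finset.sum_congr rfl fun i _ => by ring
  have hEybound : ∑ i, d i * y i * E.mulVec y i ≤ -α * (y ⬝ᵥ y) := by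
    have := hM y
    rw [hquad] at this
    linarith
  -- passivity summed with weights d i
  have hsum : 0 ≤ ∑ i, d i * (y i * (u i - y i / γ i)) :=
    Finset.sum_nonneg fun i _ => mul_nonneg (hd i).le (hpass i)
  have hsplit : ∑ i, d i * (y i * (u i - y i / γ i))
      = ((fun i => d i * y i) ⬝ᵥ v) + ∑ i, d i * y i * E.mulVec y i := by
    simp only [dotProduct]
    rw [← Finset.sum_add_distrib]
    refine Finset.sum_congr rfl fun i _ => ?_
    rw [hEy i]; ring
  have key : α * (y ⬝ᵥ y) ≤ (fun i => d i * y i) ⬝ᵥ v := by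
    rw [hsplit] at hsum; linarith
  refine ⟨key, ?_⟩
  -- second part
  have hyy : (0:ℝ) ≤ y ⬝ᵥ y :=
    Finset.sum_nonneg fun i _ => mul_self_nonneg (y i)
  have hvv : (0:ℝ) ≤ v ⬝ᵥ v :=
    Finset.sum_nonneg fun i _ => mul_self_nonneg (v i)
  set a := Real.sqrt (y ⬝ᵥ y) with ha
  set b := Real.sqrt (v ⬝ᵥ v) with hb
  have ha2 : a ^ 2 = y ⬝ᵥ y := Real.sq_sqrt hyy
  have hb2 : b ^ 2 = v ⬝ᵥ v := Real.sq_sqrt hvv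
  have hanon : 0 ≤ a := Real.sqrt_nonneg _
  have hbnon : 0 ≤ b := Real.sqrt_nonneg _
  have hdnorm : 0 ≤ ‖d‖ := norm_nonneg d
  -- Cauchy–Schwarz: ⟨Dy, v⟩ ≤ ‖d‖ a b
  have hcs : ((fun i => d i * y i) ⬝ᵥ v) ^ 2 ≤ (‖d‖ * a * b) ^ 2 := by
    have h1 : ((fun i => d i * y i) ⬝ᵥ v) ^ 2
        ≤ (∑ i, (d i * y i) ^ 2) * ∑ i, (v i) ^ 2 :=
      Finset.sum_mul_sq_le_sq_mul_sq Finset.univ _ _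
    have h2 : (∑ i, (d i * y i) ^ 2) ≤ ‖d‖ ^ 2 * ∑ i, (y i) ^ 2 := by
      rw [Finset.mul_sum]
      refine Finset.sum_le_sum fun i _ => ?_
      have := norm_le_pi_norm d i
      have hdi : |d i| ≤ ‖d‖ := by simpa [Real.norm_eq_abs] using this
      have h3 : |d i| * |d i| * (y i) ^ 2 ≤ ‖d‖ * ‖d‖ * (y i) ^ 2 :=
        mul_le_mul_of_nonneg_right (mul_self_le_mul_self (abs_nonneg _) hdi) (sq_nonneg _)
      nlinarith [sq_abs (d i), h3]
    have hyy' : (∑ i, (y i) ^ 2) = y ⬝ᵥ y := by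
      simp [dotProduct, sq]
    have hvv' : (∑ i, (v i) ^ 2) = v ⬝ᵥ v := by
      simp [dotProduct, sq]
    have hsumv : (0:ℝ) ≤ ∑ i, (v i) ^ 2 := Finset.sum_nonneg fun i _ => sq_nonneg _
    calc ((fun i => d i * y i) ⬝ᵥ v) ^ 2
        ≤ (∑ i, (d i * y i) ^ 2) * ∑ i, (v i) ^ 2 := h1
      _ ≤ (‖d‖ ^ 2 * ∑ i, (y i) ^ 2) * ∑ i, (v i) ^ 2 :=
          mul_le_mul_of_nonneg_right h2 hsumv
      _ = (‖d‖ * a * b) ^ 2 := by rw [hyy', hvv', ← ha2, ← hb2]; ring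
  have hDv_nonneg : 0 ≤ (fun i => d i * y i) ⬝ᵥ v :=
    le_trans (by positivity) key
  have hcs' : (fun i => d i * y i) ⬝ᵥ v ≤ ‖d‖ * a * b := by
    nlinarith [hcs, hDv_nonneg, mul_nonneg (mul_nonneg hdnorm hanon) hbnon]
  -- α a² ≤ ‖d‖ a b
  have hfin : α * a ^ 2 ≤ ‖d‖ * a * b := by rw [ha2]; linarith
  rcases eq_or_lt_of_le hanon with h0 | h0
  · rw [← h0]; positivity
  · rw [div_mul_eq_mul_div, le_div_iff₀ hα]
    nlinarith [hfin, h0, hbnon, hdnorm]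
end

section
/- For the 3×3 matrix E with diagonal entries (−1/γ_1, −1/γ_2, −1/γ_3), entries E_{21}=E_{32}=1, E_{13}=−1, and zeros elsewhere (γ_i>0), diagonal stability of E is equivalent to γ_1γ_2γ_3 < 8. -/
open Matrix

/-!
Let `S = -(EᵀD + DE)`. Rescaling the coordinates so that the off-diagonal entries of `S` become
`±1` turns its diagonal into `2c₀, 2c₁, 2c₂` with `c₀c₁c₂ = 1 / (γ₀γ₁γ₂)`, the same for every `D`.
If `p³ = γ₀γ₁γ₂` with `p < 2`, the choice `D = diag(γ₁/γ₂, γ₁/p, p/γ₂)` makes every `cᵢ = 1/p`,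
and then `S` is the form `(2/p - 1)|y|² + (y₀ - y₁ + y₂)²`, which is positive definite.
Conversely, positivity of the leading minors of `S` of orders 2 and 3 reads
`4c₀c₁ > 1` and `c₀ + c₁ + c₂ < 4c₀c₁c₂ + 1`, and with AM-GM these force `8c₀c₁c₂ > 1`.
-/

lemma negDefQ_iff_posDef_neg {n : Type*} [Fintype n] {M : Matrix n n ℝ} (hM : M.IsSymm) :
    NegDefQ M ↔ (-M).PosDef := by
  simp [posDef_iff_dotProduct_mulVec, NegDefQ, neg_mulVec, hM]

lemma isSymm_transpose_mul_diagonal_add {n R : Type*} [Fintype n] [DecidableEq n] [CommRing R]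
    (E : Matrix n n R) (d : n → R) : (Eᵀ * diagonal d + diagonal d * E).IsSymm := by
  simp [IsSymm, transpose_add, transpose_mul, add_comm]

-- The hypotheses say that the leading minors of `!![2a, -1, 1; -1, 2b, -1; 1, -1, 2c]` are positive.
-- With `q = ab`, eliminating `c` and using `a + b ≥ 2√q` leaves `(4q - 1)²(16q - 1) < 0`.
lemma one_lt_eight_mul_of_minors_pos {a b c : ℝ} (ha : 0 < a) (hab : 1 < 4 * a * b)
    (habc : a + b + c < 4 * a * b * c + 1) : 1 < 8 * a * b * c := by
  by_contra! h
  have hb : 0 < b := by nlinarith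
  set q := a * b
  have hq : 1 < 4 * q := by linarith
  have hu : 0 < 8 * q * (a + b) := by positivity
  have h1 : 8 * q * (a + b) < 12 * q - 1 := by nlinarith
  have h2 : 256 * q ^ 3 ≤ (8 * q * (a + b)) ^ 2 := by nlinarith [sq_nonneg (a - b), sq_nonneg q]
  have h3 : (8 * q * (a + b)) ^ 2 < (12 * q - 1) ^ 2 := by gcongr
  nlinarith [mul_pos (pow_pos (show 0 < 4 * q - 1 by linarith) 2) (show 0 < 16 * q - 1 by linarith)]

noncomputable def cyclicMatrix (γ : Fin 3 → ℝ) : Matrix (Fin 3) (Fin 3) ℝ :=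
  !![-(γ 0)⁻¹, 0, -1; 1, -(γ 1)⁻¹, 0; 0, 1, -(γ 2)⁻¹]

noncomputable def cyclicGram (γ d : Fin 3 → ℝ) : Matrix (Fin 3) (Fin 3) ℝ :=
  !![2 * d 0 / γ 0, -d 1, d 0; -d 1, 2 * d 1 / γ 1, -d 2; d 0, -d 2, 2 * d 2 / γ 2]

-- Half the diagonal of `cyclicGram γ d` after rescaling its off-diagonal entries to `±1`.
noncomputable def cyclicWeight (γ d : Fin 3 → ℝ) : Fin 3 → ℝ :=
  ![d 2 / (γ 0 * d 1), d 0 / (γ 1 * d 2), d 1 / (γ 2 * d 0)]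

lemma neg_lyapunov_cyclicMatrix (γ d : Fin 3 → ℝ) :
    -((cyclicMatrix γ)ᵀ * diagonal d + diagonal d * cyclicMatrix γ) = cyclicGram γ d := by
  ext i j
  fin_cases i <;> fin_cases j <;>
    simp [cyclicMatrix, cyclicGram, Matrix.mul_apply, Fin.sum_univ_three] <;> ring

lemma diagStable_cyclicMatrix_iff (γ : Fin 3 → ℝ) :
    DiagStable (cyclicMatrix γ) ↔ ∃ d : Fin 3 → ℝ, (∀ i, 0 < d i) ∧ (cyclicGram γ d).PosDef := by
  simp only [DiagStable, negDefQ_iff_posDef_neg (isSymm_transpose_mul_diagonal_add _ _),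
    neg_lyapunov_cyclicMatrix]

section Minors

variable {γ d : Fin 3 → ℝ} (hγ : ∀ i, γ i ≠ 0) (hd : ∀ i, d i ≠ 0)
include hγ hd

lemma det_cyclicGram_submatrix :
    ((cyclicGram γ d).submatrix ![0, 1] ![0, 1]).det =
      d 1 ^ 2 * (4 * cyclicWeight γ d 0 * cyclicWeight γ d 1 - 1) := by
  have := hγ 0; have := hγ 1; have := hd 1; have := hd 2
  rw [det_fin_two]
  simp only [cyclicGram, cyclicWeight, submatrix_apply, of_apply, cons_val', cons_val_zero,
    cons_val_one, cons_val_fin_one, mul_neg, neg_mul, neg_neg]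
  field_simp
  ring

lemma det_cyclicGram :
    (cyclicGram γ d).det = 2 * d 0 * d 1 * d 2 *
      (4 * cyclicWeight γ d 0 * cyclicWeight γ d 1 * cyclicWeight γ d 2 + 1 -
        (cyclicWeight γ d 0 + cyclicWeight γ d 1 + cyclicWeight γ d 2)) := by
  have := hγ 0; have := hγ 1; have := hγ 2; have := hd 0; have := hd 1; have := hd 2
  simp only [cyclicGram, cyclicWeight, det_fin_three, of_apply, cons_val', cons_val_zero,
    cons_val_one, cons_val, cons_val_fin_one, mul_neg, neg_mul, neg_neg]
  field_simp
  ring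

lemma cyclicWeight_prod :
    cyclicWeight γ d 0 * cyclicWeight γ d 1 * cyclicWeight γ d 2 = (γ 0 * γ 1 * γ 2)⁻¹ := by
  have := hγ 0; have := hγ 1; have := hγ 2; have := hd 0; have := hd 1; have := hd 2
  simp only [cyclicWeight, cons_val_zero, cons_val_one, cons_val]
  field_simp

end Minors

lemma mul_lt_eight_of_posDef_cyclicGram {γ d : Fin 3 → ℝ} (hγ : ∀ i, 0 < γ i)
    (hd : ∀ i, 0 < d i) (h : (cyclicGram γ d).PosDef) : γ 0 * γ 1 * γ 2 < 8 := by
  have := hγ 0; have := hγ 1; have := hγ 2; have := hd 0; have := hd 1; have := hd 2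
  have hγ' : ∀ i, γ i ≠ 0 := fun i => (hγ i).ne'
  have hd' : ∀ i, d i ≠ 0 := fun i => (hd i).ne'
  have hminor := (h.submatrix (e := ![0, 1]) (by decide)).det_pos
  have hdet := h.det_pos
  rw [det_cyclicGram_submatrix hγ' hd'] at hminor
  rw [det_cyclicGram hγ' hd'] at hdet
  have hprod := cyclicWeight_prod hγ' hd'
  set c := cyclicWeight γ d
  have hc0 : 0 < c 0 := by simp only [c, cyclicWeight, cons_val_zero]; positivity
  have hc01 : 1 < 4 * c 0 * c 1 := by linarith [pos_of_mul_pos_right hminor (by positivity)]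
  have hc012 : c 0 + c 1 + c 2 < 4 * c 0 * c 1 * c 2 + 1 := by
    linarith [pos_of_mul_pos_right hdet (by positivity)]
  have h8 := one_lt_eight_mul_of_minors_pos hc0 hc01 hc012
  rwa [mul_assoc 8, mul_assoc 8, hprod, ← div_eq_mul_inv,
    one_lt_div (by positivity)] at h8

lemma dotProduct_cyclicGram_mulVec {γ : Fin 3 → ℝ} {p : ℝ} (hp0 : 0 < p)
    (hp : p ^ 3 = γ 0 * γ 1 * γ 2) (x : Fin 3 → ℝ) :
    x ⬝ᵥ (cyclicGram γ ![γ 1 / γ 2, γ 1 / p, p / γ 2] *ᵥ x) =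
      (2 / p - 1) * ((γ 1 * x 0 / p) ^ 2 + x 1 ^ 2 + (p * x 2 / γ 2) ^ 2) +
        (γ 1 * x 0 / p - x 1 + p * x 2 / γ 2) ^ 2 := by
  have hγ : γ 0 * γ 1 * γ 2 ≠ 0 := hp ▸ by positivity
  simp only [mul_ne_zero_iff] at hγ
  obtain ⟨⟨h0, h1⟩, h2⟩ := hγ
  simp only [cyclicGram, dotProduct, mulVec, of_apply, cons_val', cons_val_zero, cons_val_one,
    cons_val, cons_val_fin_one, Fin.sum_univ_three]
  field_simp
  linear_combination (2 * x 0 ^ 2 * γ 1 * γ 2) * hp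

lemma posDef_cyclicGram {γ : Fin 3 → ℝ} {p : ℝ} (hp0 : 0 < p) (hp2 : p < 2)
    (hp : p ^ 3 = γ 0 * γ 1 * γ 2) : (cyclicGram γ ![γ 1 / γ 2, γ 1 / p, p / γ 2]).PosDef := by
  have hγ : γ 0 * γ 1 * γ 2 ≠ 0 := hp ▸ by positivity
  simp only [mul_ne_zero_iff] at hγ
  obtain ⟨⟨-, h1⟩, h2⟩ := hγ
  refine .of_dotProduct_mulVec_pos ?_ fun x hx => ?_
  · ext i j
    fin_cases i <;> fin_cases j <;> simp [cyclicGram]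
  rw [star_trivial, dotProduct_cyclicGram_mulVec hp0 hp]
  have hy : 0 < (γ 1 * x 0 / p) ^ 2 + x 1 ^ 2 + (p * x 2 / γ 2) ^ 2 := by
    obtain ⟨i, hi⟩ := Function.ne_iff.mp hx
    fin_cases i <;> simp only [Pi.zero_apply] at hi <;> positivity
  have hcoef : 0 < 2 / p - 1 := by rw [sub_pos, lt_div_iff₀ hp0]; linarith
  exact add_pos_of_pos_of_nonneg (mul_pos hcoef hy) (sq_nonneg _)

theorem cyclic3_diag_stable_iff (γ : Fin 3 → ℝ) (hγ : ∀ i, 0 < γ i) :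
    DiagStable !![-(γ 0)⁻¹, 0, -1;
                  1, -(γ 1)⁻¹, 0;
                  0, 1, -(γ 2)⁻¹] ↔ γ 0 * γ 1 * γ 2 < 8 := by
  have := hγ 0; have := hγ 1; have := hγ 2
  change DiagStable (cyclicMatrix γ) ↔ _
  rw [diagStable_cyclicMatrix_iff]
  constructor
  · rintro ⟨d, hd, hpos⟩
    exact mul_lt_eight_of_posDef_cyclicGram hγ hd hpos
  · intro h8
    obtain ⟨p, hp0, hp⟩ : ∃ p : ℝ, 0 < p ∧ p ^ 3 = γ 0 * γ 1 * γ 2 :=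
      ⟨_, by positivity, Real.rpow_inv_natCast_pow (by positivity) three_ne_zero⟩
    have hp2 : p < 2 := lt_of_pow_lt_pow_left₀ 3 zero_le_two (by linarith)
    refine ⟨_, fun i => ?_, posDef_cyclicGram hp0 hp2 hp⟩
    fin_cases i <;> simp <;> positivity
end
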